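/- arXiv:1205.2819 — 3 statements merged into one kernel-verified Lean document; each statement's English description precedes it below -/
import Mathlib

section
/- Let H be an almost normal subgroup of a group G and let Γ be a subgroup of G containing H. Then H is an almost normal subgroup of Γ, and if the Hecke pair (G,H) has property (RD), then the Hecke pair (Γ,H) has property (RD). -/
noncomputable section

namespace HeckeRDPaper

/-- The conjugate subgroup `gHg⁻¹`. -/
def conjS {G : Type*} [Group G] (g : G) (H : Subgroup G) : Subgroup G :=
  Subgroup.map (MulAut.conj g).toMonoidHom H

/-- `H` is an almost normal subgroup of `G`: the index `|H : H ∩ gHg⁻¹|` is finite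
for every `g ∈ G`. -/
def AlmostNormal {G : Type*} [Group G] (H : Subgroup G) : Prop :=
  ∀ g : G, (conjS g H).relIndex H ≠ 0

/-- `H` and `K` are strongly commensurable: `H ∩ K` has finite index in both `H` and `K`. -/
def StronglyCommensurable {G : Type*} [Group G] (H K : Subgroup G) : Prop :=
  (H ⊓ K).relIndex H ≠ 0 ∧ (H ⊓ K).relIndex K ≠ 0

/-- `H` and `K` are commensurable: `H` and `gKg⁻¹` are strongly commensurable
for some `g ∈ G`. -/
def Commens {G : Type*} [Group G] (H K : Subgroup G) : Prop :=
  ∃ g : G, StronglyCommensurable H (conjS g K)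

/-- A length function on a group `G`. -/
structure IsLengthFunction {G : Type*} [Group G] (L : G → ℝ) : Prop where
  nonneg : ∀ g, 0 ≤ L g
  map_one : L 1 = 0
  map_inv : ∀ g, L g⁻¹ = L g
  subadd : ∀ g h, L (g * h) ≤ L g + L h

/-- A length function on the Hecke pair `(G, H)`: a length function on `G`
vanishing on `H`. -/
def IsHeckeLength {G : Type*} [Group G] (H : Subgroup G) (L : G → ℝ) : Prop :=
  IsLengthFunction L ∧ ∀ h ∈ H, L h = 0

/-- `L₁` dominates `L₂` if `L₂ ≤ a L₁ + b` for some positive constants `a`, `b`. -/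
def Dominates {G : Type*} [Group G] (L₁ L₂ : G → ℝ) : Prop :=
  ∃ a b : ℝ, 0 < a ∧ 0 < b ∧ ∀ g, L₂ g ≤ a * L₁ g + b

/-- Two length functions are equivalent if they dominate each other. -/
def EquivLen {G : Type*} [Group G] (L₁ L₂ : G → ℝ) : Prop :=
  Dominates L₁ L₂ ∧ Dominates L₂ L₁

/-- The set `H\G` of right cosets of `H` in `G`. -/
abbrev RCos {G : Type*} [Group G] (H : Subgroup G) := Quotient (QuotientGroup.rightRel H)

/-- The `ℓ²`-norm over the right cosets `H\G` of a (left `H`-invariant) function on `G`,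
computed using the set of representatives given by `Quotient.out`. -/
def l2 {G : Type*} [Group G] (H : Subgroup G) (f : G → ℝ) : ℝ :=
  Real.sqrt (∑' x : RCos H, f x.out ^ 2)

/-- The convolution `(f∗k)(g) = Σ_{x ∈ ⟨H\G⟩} f(gx⁻¹) k(x)`, the sum being over the
set of representatives of the right cosets of `H` given by `Quotient.out`. -/
def conv {G : Type*} [Group G] (H : Subgroup G) (f k : G → ℝ) : G → ℝ :=
  fun g => ∑' x : RCos H, f (g * x.out⁻¹) * k x.out

/-- `f` is supported on finitely many double cosets of `H`. -/
def FinDosetSupp {G : Type*} [Group G] (H : Subgroup G) (f : G → ℝ) : Prop :=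
  {s : Set G | ∃ g : G, f g ≠ 0 ∧
    s = {y : G | ∃ h₁ ∈ H, ∃ h₂ ∈ H, y = h₁ * g * h₂}}.Finite

/-- The Hecke pair `(G, H)` has property (RD) with respect to the length function `L`:
there is a polynomial `P` such that `‖f∗k‖₂ ≤ P(r) ‖f‖₂ ‖k‖₂` for every `r > 0`,
every nonnegative `H`-bi-invariant `f` supported on finitely many double cosets and
with `L ≤ r` on its support, and every nonnegative left-`H`-invariant square-summable `k`. -/
def HeckeRDwrt {G : Type*} [Group G] (H : Subgroup G) (L : G → ℝ) : Prop :=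
  ∃ P : Polynomial ℝ, ∀ r : ℝ, 0 < r → ∀ f k : G → ℝ,
    (∀ g, 0 ≤ f g) →
    (∀ g : G, ∀ h₁ ∈ H, ∀ h₂ ∈ H, f (h₁ * g * h₂) = f g) →
    FinDosetSupp H f →
    (∀ g, f g ≠ 0 → L g ≤ r) →
    (∀ g, 0 ≤ k g) →
    (∀ g : G, ∀ h ∈ H, k (h * g) = k g) →
    Summable (fun x : RCos H => k x.out ^ 2) →
    l2 H (conv H f k) ≤ P.eval r * l2 H f * l2 H k

/-- The Hecke pair `(G, H)` has property (RD): it has property (RD) with respect to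
some length function on `(G, H)`. -/
def HeckeRD {G : Type*} [Group G] (H : Subgroup G) : Prop :=
  ∃ L : G → ℝ, IsHeckeLength H L ∧ HeckeRDwrt H L

/-- A group has property (RD) with respect to `L` if the Hecke pair `(Γ, {1})` does. -/
def GroupRDwrt (Γ : Type*) [Group Γ] (L : Γ → ℝ) : Prop :=
  HeckeRDwrt (⊥ : Subgroup Γ) L

/-- A group has property (RD) if the Hecke pair `(Γ, {1})` does. -/
def GroupRD (Γ : Type*) [Group Γ] : Prop :=
  HeckeRD (⊥ : Subgroup Γ)

/-- A set-theoretic cross-section `σ : E/N → E` of the quotient map which is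
consistent with the Hecke pair `(·, H)`, i.e. `π ∘ σ = id`, `σ(1) = 1` and
`σ(x) H σ(x)⁻¹ = H` for all `x ∈ E/N`. -/
def ConsistentSection {E : Type*} [Group E] (N : Subgroup E) [N.Normal] (H : Subgroup E)
    (σ : E ⧸ N → E) : Prop :=
  (∀ x : E ⧸ N, (QuotientGroup.mk (σ x) : E ⧸ N) = x) ∧ σ 1 = 1 ∧
    ∀ x : E ⧸ N, ∀ h : E, h ∈ H ↔ σ x * h * (σ x)⁻¹ ∈ H

end HeckeRDPaper

/-!
Almost normality passes to preimages under any homomorphism `φ`, because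
`φ⁻¹(H) ∩ γ φ⁻¹(H) γ⁻¹ = φ⁻¹(H ∩ φ(γ) H φ(γ)⁻¹)`; for `Γ` this is the inclusion.

For (RD), extend functions on `Γ` by zero to `G`. Since `H ≤ Γ`, the right cosets `H\Γ` embed in
`H\G`, and a left `H`-invariant function supported in `Γ` vanishes off that image. Hence extension
by zero preserves invariance, finite double-coset support and the length bound (for the
restriction of `L` to `Γ`), preserves `ℓ²`-norms and commutes with convolution, so the (RD)
inequality for `(G, H)` applied to the extensions is the (RD) inequality for `(Γ, H)`.
-/

namespace HeckeRDPaper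

variable {G G' : Type*} [Group G] [Group G']

theorem conjS_comap (φ : G' →* G) (H : Subgroup G) (γ : G') :
    conjS γ (H.comap φ) = (conjS (φ γ) H).comap φ := by
  ext x
  simp only [conjS, Subgroup.mem_map, Subgroup.mem_comap, MulEquiv.coe_toMonoidHom,
    MulAut.conj_apply]
  constructor
  · rintro ⟨y, hy, rfl⟩
    exact ⟨φ y, hy, by simp⟩
  · rintro ⟨z, hz, hzx⟩
    refine ⟨γ⁻¹ * x * γ, ?_, by group⟩
    rw [map_mul, map_mul, map_inv, ← hzx]
    simpa [mul_assoc] using hz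

theorem AlmostNormal.comap {H : Subgroup G} (hH : AlmostNormal H) (φ : G' →* G) :
    AlmostNormal (H.comap φ) := fun γ => by
  rw [conjS_comap]
  exact Subgroup.relIndex_comap_ne_zero φ (hH (φ γ))

theorem IsLengthFunction.comp_monoidHom {L : G → ℝ} (hL : IsLengthFunction L) (φ : G' →* G) :
    IsLengthFunction (L ∘ φ) :=
  ⟨fun g => hL.nonneg (φ g), by simpa using hL.map_one, fun g => by simpa using hL.map_inv (φ g),
    fun g h => by simpa using hL.subadd (φ g) (φ h)⟩

theorem IsHeckeLength.comap {H : Subgroup G} {L : G → ℝ} (hL : IsHeckeLength H L)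
    (φ : G' →* G) : IsHeckeLength (H.comap φ) (L ∘ φ) :=
  ⟨hL.1.comp_monoidHom φ, fun h hh => hL.2 (φ h) hh⟩

def IsLeftInvariant (H : Subgroup G) (φ : G → ℝ) : Prop :=
  ∀ g : G, ∀ h ∈ H, φ (h * g) = φ g

def IsBiInvariant (H : Subgroup G) (φ : G → ℝ) : Prop :=
  ∀ g : G, ∀ h₁ ∈ H, ∀ h₂ ∈ H, φ (h₁ * g * h₂) = φ g

section Invariance

variable {H K : Subgroup G} {φ f k : G → ℝ}

theorem IsBiInvariant.isLeftInvariant (hφ : IsBiInvariant H φ) : IsLeftInvariant H φ :=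
  fun g h hh => by simpa using hφ g h hh 1 H.one_mem

theorem IsBiInvariant.apply_mul_right (hφ : IsBiInvariant H φ) (g : G) {h : G} (hh : h ∈ H) :
    φ (g * h) = φ g := by
  simpa using hφ g 1 H.one_mem h hh

theorem IsLeftInvariant.conv (hf : IsLeftInvariant H f) : IsLeftInvariant H (conv K f k) :=
  fun g h hh => by simp only [HeckeRDPaper.conv, mul_assoc, hf _ h hh]

theorem IsLeftInvariant.sq (hφ : IsLeftInvariant H φ) : IsLeftInvariant H (fun g => φ g ^ 2) :=
  fun g h hh => by simp only [hφ g h hh]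

theorem IsLeftInvariant.apply_out_mk (hφ : IsLeftInvariant H φ) (g : G) :
    φ (Quotient.mk'' g : RCos H).out = φ g := by
  have hrel := Quotient.mk_out (s := QuotientGroup.rightRel H) g
  rw [QuotientGroup.rightRel_apply] at hrel
  simpa using (hφ (Quotient.mk'' g : RCos H).out _ hrel).symm

end Invariance

section Restriction

variable {H Γ : Subgroup G}

open scoped Classical in
def extendByZero (Γ : Subgroup G) (f : Γ → ℝ) : G → ℝ :=
  fun g => if hg : g ∈ Γ then f ⟨g, hg⟩ else 0

@[simp]
theorem extendByZero_coe (f : Γ → ℝ) (γ : Γ) : extendByZero Γ f γ = f γ :=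
  dif_pos γ.2

theorem extendByZero_of_notMem (f : Γ → ℝ) {g : G} (hg : g ∉ Γ) : extendByZero Γ f g = 0 :=
  dif_neg hg

theorem mem_of_extendByZero_ne_zero {f : Γ → ℝ} {g : G} (hg : extendByZero Γ f g ≠ 0) :
    g ∈ Γ := by
  by_contra h
  exact hg (extendByZero_of_notMem f h)

theorem extendByZero_nonneg {f : Γ → ℝ} (hf : ∀ γ, 0 ≤ f γ) (g : G) :
    0 ≤ extendByZero Γ f g := by
  unfold extendByZero
  split_ifs
  exacts [hf _, le_rfl]

theorem extendByZero_mul_mul (f : Γ → ℝ) (a b : Γ) (g : G) :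
    extendByZero Γ f (a * g * b) = extendByZero Γ (fun γ => f (a * γ * b)) g := by
  by_cases hg : g ∈ Γ
  · lift g to Γ using hg
    simp only [← Subgroup.coe_mul, extendByZero_coe]
  · have hagb : (a : G) * g * b ∉ Γ := fun h => hg <| by
      simpa [mul_assoc] using Γ.mul_mem (Γ.mul_mem (Γ.inv_mem a.2) h) (Γ.inv_mem b.2)
    rw [extendByZero_of_notMem _ hg, extendByZero_of_notMem _ hagb]

theorem IsBiInvariant.extendByZero (hle : H ≤ Γ) {f : Γ → ℝ}
    (hf : IsBiInvariant (H.subgroupOf Γ) f) : IsBiInvariant H (extendByZero Γ f) := by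
  intro g h₁ hh₁ h₂ hh₂
  rw [show h₁ * g * h₂ = ((⟨h₁, hle hh₁⟩ : Γ) : G) * g * (⟨h₂, hle hh₂⟩ : Γ) from rfl,
    extendByZero_mul_mul]
  congr 1
  funext γ
  exact hf γ _ hh₁ _ hh₂

theorem IsLeftInvariant.extendByZero (hle : H ≤ Γ) {k : Γ → ℝ}
    (hk : IsLeftInvariant (H.subgroupOf Γ) k) : IsLeftInvariant H (extendByZero Γ k) := by
  intro g h hh
  have hmul := extendByZero_mul_mul k ⟨h, hle hh⟩ 1 g
  simp only [OneMemClass.coe_one, mul_one] at hmul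
  rw [hmul]
  congr 1
  funext γ
  exact hk γ _ hh

theorem FinDosetSupp.extendByZero (hle : H ≤ Γ) {f : Γ → ℝ}
    (hf : FinDosetSupp (H.subgroupOf Γ) f) : FinDosetSupp H (extendByZero Γ f) := by
  refine (hf.image (Subtype.val '' ·)).subset ?_
  rintro s ⟨g, hg, rfl⟩
  lift g to Γ using mem_of_extendByZero_ne_zero hg
  refine ⟨_, ⟨g, by simpa using hg, rfl⟩, ?_⟩
  ext y
  constructor
  · rintro ⟨z, ⟨h₁, hh₁, h₂, hh₂, rfl⟩, rfl⟩
    exact ⟨h₁, hh₁, h₂, hh₂, rfl⟩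
  · rintro ⟨h₁, hh₁, h₂, hh₂, rfl⟩
    exact ⟨⟨h₁, hle hh₁⟩ * g * ⟨h₂, hle hh₂⟩, ⟨_, hh₁, _, hh₂, rfl⟩, rfl⟩

def rcosIncl (H Γ : Subgroup G) : RCos (H.subgroupOf Γ) → RCos H :=
  Quotient.map' Subtype.val fun _ _ h => by
    rw [QuotientGroup.rightRel_apply] at h ⊢
    exact h

theorem rcosIncl_mk (γ : Γ) : rcosIncl H Γ (Quotient.mk'' γ) = Quotient.mk'' (γ : G) := rfl

theorem rcosIncl_injective : Function.Injective (rcosIncl H Γ) := by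
  intro x y
  induction x using Quotient.inductionOn' with | h a =>
  induction y using Quotient.inductionOn' with | h b =>
  intro hab
  apply Quotient.sound'
  have hrel := Quotient.exact' hab
  rw [QuotientGroup.rightRel_apply] at hrel ⊢
  exact hrel

theorem support_out_subset_range_rcosIncl {φ : G → ℝ} (hsupp : ∀ g, φ g ≠ 0 → g ∈ Γ) :
    Function.support (fun x : RCos H => φ x.out) ⊆ Set.range (rcosIncl H Γ) := fun x hx =>
  ⟨Quotient.mk'' ⟨x.out, hsupp _ hx⟩, by rw [rcosIncl_mk, Quotient.mk''_eq_mk, Quotient.out_eq]⟩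

theorem IsLeftInvariant.comp_rcosIncl {φ : G → ℝ} (hφ : IsLeftInvariant H φ) :
    (fun x : RCos H => φ x.out) ∘ rcosIncl H Γ = fun y => φ y.out := by
  funext y
  conv_lhs => rw [← Quotient.out_eq' y]
  exact hφ.apply_out_mk _

theorem IsLeftInvariant.tsum_out_eq_tsum_subgroupOf {φ : G → ℝ} (hφ : IsLeftInvariant H φ)
    (hsupp : ∀ g, φ g ≠ 0 → g ∈ Γ) :
    ∑' x : RCos H, φ x.out = ∑' y : RCos (H.subgroupOf Γ), φ y.out := by
  rw [← hφ.comp_rcosIncl]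
  exact (rcosIncl_injective.tsum_eq (support_out_subset_range_rcosIncl hsupp)).symm

theorem IsLeftInvariant.summable_out_iff_subgroupOf {φ : G → ℝ} (hφ : IsLeftInvariant H φ)
    (hsupp : ∀ g, φ g ≠ 0 → g ∈ Γ) :
    Summable (fun x : RCos H => φ x.out) ↔
      Summable (fun y : RCos (H.subgroupOf Γ) => φ y.out) := by
  rw [← hφ.comp_rcosIncl, rcosIncl_injective.summable_iff]
  exact fun x hx => Function.notMem_support.1
    fun hx' => hx (support_out_subset_range_rcosIncl hsupp hx')

theorem mem_of_extendByZero_sq_ne_zero {f : Γ → ℝ} {g : G} (hg : extendByZero Γ f g ^ 2 ≠ 0) :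
    g ∈ Γ :=
  mem_of_extendByZero_ne_zero (ne_zero_pow two_ne_zero hg)

theorem summable_extendByZero_sq (hle : H ≤ Γ) {k : Γ → ℝ}
    (hk : IsLeftInvariant (H.subgroupOf Γ) k)
    (hk_sum : Summable (fun y : RCos (H.subgroupOf Γ) => k y.out ^ 2)) :
    Summable (fun x : RCos H => extendByZero Γ k x.out ^ 2) := by
  rw [(hk.extendByZero hle).sq.summable_out_iff_subgroupOf
    fun _ => mem_of_extendByZero_sq_ne_zero]
  simpa using hk_sum

theorem l2_extendByZero (hle : H ≤ Γ) {k : Γ → ℝ} (hk : IsLeftInvariant (H.subgroupOf Γ) k) :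
    l2 H (extendByZero Γ k) = l2 (H.subgroupOf Γ) k := by
  rw [l2, l2, (hk.extendByZero hle).sq.tsum_out_eq_tsum_subgroupOf
    fun _ => mem_of_extendByZero_sq_ne_zero]
  simp only [extendByZero_coe]

theorem conv_extendByZero (hle : H ≤ Γ) {f k : Γ → ℝ} (hf : IsBiInvariant (H.subgroupOf Γ) f)
    (hk : IsLeftInvariant (H.subgroupOf Γ) k) :
    conv H (extendByZero Γ f) (extendByZero Γ k) = extendByZero Γ (conv (H.subgroupOf Γ) f k) := by
  have hF := hf.extendByZero hle
  have hK := hk.extendByZero hle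
  funext g
  by_cases hg : g ∈ Γ
  · lift g to Γ using hg
    have hterm : IsLeftInvariant H fun x => extendByZero Γ f (g * x⁻¹) * extendByZero Γ k x :=
      fun x h hh => by
        simp only [mul_inv_rev, ← mul_assoc, hF.apply_mul_right _ (H.inv_mem hh), hK x h hh]
    rw [extendByZero_coe, conv, conv, hterm.tsum_out_eq_tsum_subgroupOf
      fun x hx => mem_of_extendByZero_ne_zero (right_ne_zero_of_mul hx)]
    simp only [← Subgroup.coe_inv, ← Subgroup.coe_mul, extendByZero_coe]
  · rw [extendByZero_of_notMem _ hg, conv]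
    refine (tsum_congr fun x => ?_).trans tsum_zero
    by_contra hx
    have hmem := Γ.mul_mem (mem_of_extendByZero_ne_zero (left_ne_zero_of_mul hx))
      (mem_of_extendByZero_ne_zero (right_ne_zero_of_mul hx))
    exact hg (by simpa using hmem)

theorem HeckeRDwrt.subgroupOf (hle : H ≤ Γ) {L : G → ℝ} (hRD : HeckeRDwrt H L) :
    HeckeRDwrt (H.subgroupOf Γ) (L ∘ Γ.subtype) := by
  obtain ⟨P, hP⟩ := hRD
  refine ⟨P, fun r hr f k hf₀ (hf : IsBiInvariant _ f) hf_supp hfL hk₀ hk hk_sum => ?_⟩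
  have hbound := hP r hr (extendByZero Γ f) (extendByZero Γ k) (extendByZero_nonneg hf₀)
    (hf.extendByZero hle) (hf_supp.extendByZero hle) ?_ (extendByZero_nonneg hk₀)
    (IsLeftInvariant.extendByZero hle hk) (summable_extendByZero_sq hle hk hk_sum)
  · rwa [conv_extendByZero hle hf hk, l2_extendByZero hle hf.isLeftInvariant.conv,
      l2_extendByZero hle hf.isLeftInvariant, l2_extendByZero hle hk] at hbound
  · intro g hg
    lift g to Γ using mem_of_extendByZero_ne_zero hg
    exact hfL g (by simpa using hg)

end Restriction

end HeckeRDPaper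

open HeckeRDPaper in
/-- If `H ≤ Γ ≤ G` and `H` is almost normal in `G`, then `H` is almost
normal in `Γ`, and (RD) for `(G,H)` implies (RD) for `(Γ,H)`. -/
theorem stmt8 {G : Type*} [Group G] (H Γ : Subgroup G)
    (hH : AlmostNormal H) (hle : H ≤ Γ) :
    AlmostNormal (H.subgroupOf Γ) ∧ (HeckeRD H → HeckeRD (H.subgroupOf Γ)) := by
  refine ⟨hH.comap Γ.subtype, ?_⟩
  rintro ⟨L, hL, hRD⟩
  exact ⟨L ∘ Γ.subtype, hL.comap Γ.subtype, hRD.subgroupOf hle⟩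
end
end

section
/- Let H and K be two almost normal subgroups of a group G and suppose there exists g ∈ G such that gKg⁻¹ is strongly commensurable with H. If L is a length function on G with L vanishing on both gKg⁻¹ and H, then the Hecke pair (G,H) has property (RD) with respect to L if and only if the Hecke pair (G,K) has property (RD) with respect to L. -/
noncomputable section

/-!
Both pairs are compared with `(G, M)` for `M = gKg⁻¹ ⊓ H`, which has finite index in `H` and in
`gKg⁻¹`. Conjugation by `g` moves `L` by at most `2 L g`, so `(G, K)` and `(G, gKg⁻¹)` have (RD)
together. For `M ≤ H` of finite index `n`, an `H`-bi-invariant `f` and a left `H`-invariant `k` are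
also `M`-invariant, and their `ℓ²`-norms over `M\G` and `H\G` differ by a factor at most `n`.
Conversely, an `M`-bi-invariant `f` and a left `M`-invariant `k` are dominated, in the convolution
`f ∗ k`, by their sums over representatives of `M` in `H`; these sums are `H`-invariant, have
norms bounded by powers of `n`, and, as `L` vanishes on `H`, the same support radius.

The estimates are made for squared norms in `ℝ≥0∞`. Returning to `l2`, which is `0` on functions
that are not square-summable, needs `f ∗ k` to be square-summable: this is Schur's test, which
applies because a double coset of an almost normal subgroup is a finite union of right cosets.
-/

open scoped ENNReal Pointwise
open DoubleCoset

namespace HeckeRDPaper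

variable {G : Type*} [Group G]

section Invariance

variable {X : Type*} (N : Subgroup G)

def LeftInvariant (φ : G → X) : Prop :=
  ∀ g : G, ∀ h ∈ N, φ (h * g) = φ g

def RightInvariant (φ : G → X) : Prop :=
  ∀ g : G, ∀ h ∈ N, φ (g * h) = φ g

def BiInvariant (φ : G → X) : Prop :=
  ∀ g : G, ∀ h₁ ∈ N, ∀ h₂ ∈ N, φ (h₁ * g * h₂) = φ g

variable {N} {φ : G → X}

lemma biInvariant_iff : BiInvariant N φ ↔ LeftInvariant N φ ∧ RightInvariant N φ := by
  refine ⟨fun h => ⟨fun g a ha => ?_, fun g b hb => ?_⟩, fun ⟨hl, hr⟩ g a ha b hb => ?_⟩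
  · simpa using h g a ha 1 N.one_mem
  · simpa using h g 1 N.one_mem b hb
  · rw [hr _ b hb, hl g a ha]

lemma LeftInvariant.mono {M : Subgroup G} (hφ : LeftInvariant N φ) (hMN : M ≤ N) :
    LeftInvariant M φ :=
  fun g h hh => hφ g h (hMN hh)

lemma BiInvariant.mono {M : Subgroup G} (hφ : BiInvariant N φ) (hMN : M ≤ N) :
    BiInvariant M φ :=
  fun g a ha b hb => hφ g a (hMN ha) b (hMN hb)

lemma LeftInvariant.comp {Y : Type*} (hφ : LeftInvariant N φ) (u : X → Y) :
    LeftInvariant N (u ∘ φ) :=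
  fun g h hh => congrArg u (hφ g h hh)

end Invariance

section RightCosets

variable (N : Subgroup G)

abbrev RCos.mk (z : G) : RCos N := Quotient.mk _ z

@[simp] lemma RCos.mk_out (x : RCos N) : RCos.mk N x.out = x := Quotient.out_eq x

lemma RCos.mk_eq_mk {a b : G} : RCos.mk N a = RCos.mk N b ↔ b * a⁻¹ ∈ N :=
  Quotient.eq.trans QuotientGroup.rightRel_apply

lemma RCos.out_mk_mul_inv_mem (z : G) : (RCos.mk N z).out * z⁻¹ ∈ N := by
  simpa using N.inv_mem ((RCos.mk_eq_mk N).1 (RCos.mk_out N (RCos.mk N z)))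

def RCos.mulRight (c : G) : RCos N ≃ RCos N :=
  Quotient.congr (Equiv.mulRight c) fun a b => by
    simp [QuotientGroup.rightRel_apply, mul_assoc]

lemma RCos.mulRight_apply (c : G) (x : RCos N) :
    RCos.mulRight N c x = RCos.mk N (x.out * c) := by
  conv_lhs => rw [← RCos.mk_out N x]
  rfl

variable {N} {X : Type*} {φ : G → X}

lemma LeftInvariant.out_mk (hφ : LeftInvariant N φ) (z : G) : φ (RCos.mk N z).out = φ z := by
  simpa using hφ z _ (RCos.out_mk_mul_inv_mem N z)

lemma LeftInvariant.tsum_out_mul {φ : G → ℝ≥0∞} (hφ : LeftInvariant N φ) (c : G) :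
    ∑' x : RCos N, φ (x.out * c) = ∑' x : RCos N, φ x.out := by
  conv_rhs => rw [← (RCos.mulRight N c).tsum_eq]
  simp only [RCos.mulRight_apply, hφ.out_mk]

end RightCosets

section DoubleCosets

variable {N : Subgroup G}

lemma inv_mem_doubleCoset {c z : G} (hz : z ∈ doubleCoset c N N) :
    z⁻¹ ∈ doubleCoset c⁻¹ N N := by
  obtain ⟨a, ha, b, hb, rfl⟩ := mem_doubleCoset.1 hz
  exact mem_doubleCoset.2 ⟨b⁻¹, N.inv_mem hb, a⁻¹, N.inv_mem ha, by group⟩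

lemma mem_doubleCoset_of_mul_mul_mem {a b c z : G} (ha : a ∈ N) (hb : b ∈ N)
    (h : a * z * b ∈ doubleCoset c N N) : z ∈ doubleCoset c N N := by
  obtain ⟨x, hx, y, hy, e⟩ := mem_doubleCoset.1 h
  refine mem_doubleCoset.2 ⟨a⁻¹ * x, N.mul_mem (N.inv_mem ha) hx, y * b⁻¹,
    N.mul_mem hy (N.inv_mem hb), ?_⟩
  calc z = a⁻¹ * (a * z * b) * b⁻¹ := by group
    _ = a⁻¹ * x * c * (y * b⁻¹) := by rw [e]; group

lemma doubleCoset_mono {M : Subgroup G} (hMN : M ≤ N) (c : G) :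
    doubleCoset c M M ⊆ doubleCoset c N N := by
  intro z hz
  obtain ⟨a, ha, b, hb, rfl⟩ := mem_doubleCoset.1 hz
  exact mem_doubleCoset.2 ⟨a, hMN ha, b, hMN hb, rfl⟩

lemma finDosetSupp_iff {f : G → ℝ} :
    FinDosetSupp N f ↔
      ∃ C : Set G, C.Finite ∧ ∀ z, f z ≠ 0 → ∃ c ∈ C, z ∈ doubleCoset c N N := by
  have hset : {s : Set G | ∃ g : G, f g ≠ 0 ∧
      s = {y : G | ∃ h₁ ∈ N, ∃ h₂ ∈ N, y = h₁ * g * h₂}} =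
      (fun c => doubleCoset c N N) '' {g | f g ≠ 0} := by
    ext s
    refine exists_congr fun g => and_congr_right fun _ => ?_
    rw [eq_comm]
    exact Eq.congr_left (Set.ext fun _ => mem_doubleCoset.symm)
  rw [FinDosetSupp, hset]
  constructor
  · intro hfin
    obtain ⟨C, -, hC, hCeq⟩ :=
      Set.exists_subset_image_finite_and.1 ⟨_, subset_rfl, hfin, rfl⟩
    refine ⟨C, hC, fun z hz => ?_⟩
    obtain ⟨c, hc, hcz⟩ :=
      hCeq.subset (Set.mem_image_of_mem _ (show z ∈ {g | f g ≠ 0} from hz))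
    exact ⟨c, hc, (show doubleCoset c N N = _ from hcz) ▸ mem_doubleCoset_self N N z⟩
  · rintro ⟨C, hC, hcover⟩
    refine (hC.image fun c => doubleCoset c N N).subset ?_
    rintro _ ⟨z, hz, rfl⟩
    obtain ⟨c, hc, hzc⟩ := hcover z hz
    exact ⟨c, hc, (doubleCoset_eq_of_mem hzc).symm⟩

end DoubleCosets

section Commensurability

lemma mem_conjS {g y : G} {K : Subgroup G} : y ∈ conjS g K ↔ g⁻¹ * y * g ∈ K := by
  rw [conjS, Subgroup.mem_map_equiv, MulAut.conj_symm_apply]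

lemma conjS_eq_smul (g : G) (K : Subgroup G) : conjS g K = ConjAct.toConjAct g • K := by
  ext y
  simp [mem_conjS, Subgroup.mem_pointwise_smul_iff_inv_smul_mem, ConjAct.smul_def]

lemma conjS_inv_conjS (g : G) (K : Subgroup G) : conjS g⁻¹ (conjS g K) = K := by
  rw [conjS_eq_smul, conjS_eq_smul, map_inv, inv_smul_smul]

lemma relIndex_smul (t : ConjAct G) (A B : Subgroup G) :
    (t • A).relIndex (t • B) = A.relIndex B :=
  (Nat.card_congr (A.quotConjEquiv B t)).symm

lemma almostNormal_iff_commensurator_eq_top {H : Subgroup G} :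
    AlmostNormal H ↔ Subgroup.Commensurable.commensurator H = ⊤ := by
  simp only [AlmostNormal, conjS_eq_smul, Subgroup.eq_top_iff',
    Subgroup.Commensurable.commensurator_mem_iff, Subgroup.Commensurable]
  refine ⟨fun h g => ⟨h g, ?_⟩, fun h g => (h g).1⟩
  rw [← relIndex_smul (ConjAct.toConjAct g)⁻¹, inv_smul_smul, ← map_inv]
  exact h g⁻¹

lemma AlmostNormal.of_commensurable {H K : Subgroup G} (hH : AlmostNormal H)
    (hHK : Subgroup.Commensurable H K) : AlmostNormal K := by
  rw [almostNormal_iff_commensurator_eq_top, ← hHK.eq]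
  exact almostNormal_iff_commensurator_eq_top.1 hH

lemma StronglyCommensurable.commensurable {H K : Subgroup G} (h : StronglyCommensurable H K) :
    Subgroup.Commensurable H K :=
  ⟨Subgroup.inf_relIndex_right H K ▸ h.2, Subgroup.inf_relIndex_left H K ▸ h.1⟩

lemma commensurable_of_le {M H : Subgroup G} (hMH : M ≤ H) (hfin : M.relIndex H ≠ 0) :
    Subgroup.Commensurable M H :=
  ⟨hfin, by simp [Subgroup.relIndex_eq_one.2 hMH]⟩

/-- The right cosets in `N c N` are the `N c q⁻¹` for `q` running over `N ⧸ (c⁻¹ N c ⊓ N)`. -/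
lemma AlmostNormal.finite_mk_image_doubleCoset {N : Subgroup G} (hN : AlmostNormal N) (c : G) :
    (RCos.mk N '' doubleCoset c N N).Finite := by
  have : Finite (N ⧸ (conjS c⁻¹ N).subgroupOf N) := Nat.finite_of_card_ne_zero (hN c⁻¹)
  refine (Set.finite_range fun q : N ⧸ (conjS c⁻¹ N).subgroupOf N =>
    RCos.mk N (c * (q.out : G)⁻¹)).subset ?_
  rintro _ ⟨z, hz, rfl⟩
  obtain ⟨p, hp, q, hq, rfl⟩ := mem_doubleCoset.1 hz
  obtain ⟨d, hd⟩ := QuotientGroup.mk_out_eq_mul ((conjS c⁻¹ N).subgroupOf N) (⟨q, hq⟩ : N)⁻¹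
  have hd' : c * d * c⁻¹ ∈ N := by simpa [mem_conjS] using Subgroup.mem_subgroupOf.1 d.2
  refine ⟨QuotientGroup.mk (⟨q, hq⟩ : N)⁻¹, (RCos.mk_eq_mk N).2 ?_⟩
  rw [hd]
  convert N.mul_mem hp hd' using 1
  push_cast
  group

end Commensurability

section Sums

variable {ι : Type*}

lemma tsum_mul_sq_le (a k : ι → ℝ≥0∞) :
    (∑' i, a i * k i) ^ 2 ≤ 2 * (∑' i, a i) * ∑' i, a i * k i ^ 2 := by
  have hxy (x y : ℝ≥0∞) : x * y ≤ x ^ 2 + y ^ 2 := by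
    rcases le_total x y with h | h
    · exact (mul_le_mul_left h y).trans (by rw [← sq]; exact le_add_self)
    · exact (mul_le_mul_right h x).trans (by rw [← sq]; exact le_self_add)
  calc (∑' i, a i * k i) ^ 2 = ∑' i, ∑' j, a i * a j * (k i * k j) := by
        rw [sq, ← ENNReal.tsum_mul_right]
        refine tsum_congr fun i => ?_
        rw [← ENNReal.tsum_mul_left]
        exact tsum_congr fun j => by ring
    _ ≤ ∑' i, ∑' j, a i * a j * (k i ^ 2 + k j ^ 2) := by
        gcongr with i j
        exact hxy _ _
    _ = ∑' i, ∑' j, (a i * k i ^ 2 * a j + a i * (a j * k j ^ 2)) :=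
        tsum_congr fun i => tsum_congr fun j => by ring
    _ = 2 * (∑' i, a i) * ∑' i, a i * k i ^ 2 := by
        simp_rw [ENNReal.tsum_add, ENNReal.tsum_mul_left, ENNReal.tsum_mul_right]
        ring

/-- Schur's test. -/
lemma tsum_sq_tsum_mul_le {α β : Type*} (a : α → β → ℝ≥0∞) (k : β → ℝ≥0∞) {R R' : ℝ≥0∞}
    (hrow : ∀ x, ∑' y, a x y ≤ R) (hcol : ∀ y, ∑' x, a x y ≤ R') :
    ∑' x, (∑' y, a x y * k y) ^ 2 ≤ 2 * R * R' * ∑' y, k y ^ 2 :=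
  calc ∑' x, (∑' y, a x y * k y) ^ 2 ≤ ∑' x, 2 * R * ∑' y, a x y * k y ^ 2 := by
        gcongr with x
        exact (tsum_mul_sq_le _ _).trans (by gcongr; exact hrow x)
    _ = 2 * R * ∑' y, k y ^ 2 * ∑' x, a x y := by
        rw [ENNReal.tsum_mul_left, ENNReal.tsum_comm]
        simp_rw [← ENNReal.tsum_mul_left, mul_comm (k _ ^ 2)]
    _ ≤ 2 * R * ∑' y, k y ^ 2 * R' := by
        gcongr with y
        exact hcol y
    _ = 2 * R * R' * ∑' y, k y ^ 2 := by
        rw [ENNReal.tsum_mul_right]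
        ring

lemma tsum_ne_top_of_support_finite {φ : ι → ℝ≥0∞} (hS : (Function.support φ).Finite)
    (hφ : ∀ i, φ i ≠ ⊤) : ∑' i, φ i ≠ ⊤ := by
  rw [tsum_eq_sum' hS.coe_toFinset.ge]
  exact ENNReal.sum_ne_top.2 fun i _ => hφ i

lemma ofReal_sum_sq_le (s : Finset ι) {a : ι → ℝ} (ha : ∀ i, 0 ≤ a i) :
    ENNReal.ofReal (∑ i ∈ s, a i) ^ 2 ≤ s.card * ∑ i ∈ s, ENNReal.ofReal (a i) ^ 2 := by
  rw [← ENNReal.ofReal_pow (Finset.sum_nonneg fun i _ => ha i)]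
  calc ENNReal.ofReal ((∑ i ∈ s, a i) ^ 2) ≤ ENNReal.ofReal (s.card * ∑ i ∈ s, a i ^ 2) :=
        ENNReal.ofReal_le_ofReal sq_sum_le_card_mul_sum_sq
    _ = s.card * ∑ i ∈ s, ENNReal.ofReal (a i) ^ 2 := by
        rw [ENNReal.ofReal_mul (Nat.cast_nonneg _), ENNReal.ofReal_natCast,
          ENNReal.ofReal_sum_of_nonneg fun i _ => sq_nonneg _]
        simp only [ENNReal.ofReal_pow (ha _)]

end Sums

section SquareNorms

variable {N : Subgroup G}

/-- The square of `l2 N φ` for `φ ≥ 0`, computed in `ℝ≥0∞`: it is `⊤`, not `0`, when `φ` is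
not square-summable. -/
def E2 (N : Subgroup G) (φ : G → ℝ) : ℝ≥0∞ :=
  ∑' x : RCos N, ENNReal.ofReal (φ x.out) ^ 2

def econv (N : Subgroup G) (f k : G → ℝ) (z : G) : ℝ≥0∞ :=
  ∑' x : RCos N, ENNReal.ofReal (f (z * x.out⁻¹)) * ENNReal.ofReal (k x.out)

lemma l2_nonneg (φ : G → ℝ) : 0 ≤ l2 N φ := Real.sqrt_nonneg _

lemma E2_mono {φ ψ : G → ℝ} (h : ∀ g, ENNReal.ofReal (φ g) ≤ ENNReal.ofReal (ψ g)) :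
    E2 N φ ≤ E2 N ψ :=
  ENNReal.tsum_le_tsum fun _ => pow_le_pow_left' (h _) 2

lemma E2_eq_tsum_ofReal_sq {φ : G → ℝ} (h0 : ∀ g, 0 ≤ φ g) :
    E2 N φ = ∑' x : RCos N, ENNReal.ofReal (φ x.out ^ 2) :=
  tsum_congr fun _ => (ENNReal.ofReal_pow (h0 _) 2).symm

lemma E2_ne_top_iff {φ : G → ℝ} (h0 : ∀ g, 0 ≤ φ g) :
    E2 N φ ≠ ⊤ ↔ Summable fun x : RCos N => φ x.out ^ 2 := by
  rw [E2_eq_tsum_ofReal_sq h0]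
  refine ⟨fun h => (ENNReal.summable_toReal h).congr fun x => ?_, Summable.tsum_ofReal_ne_top⟩
  exact ENNReal.toReal_ofReal (sq_nonneg _)

lemma l2_eq_sqrt_toReal_E2 {φ : G → ℝ} (h0 : ∀ g, 0 ≤ φ g) :
    l2 N φ = Real.sqrt (E2 N φ).toReal := by
  rw [E2_eq_tsum_ofReal_sq h0, ENNReal.tsum_toReal_eq fun _ => ENNReal.ofReal_ne_top, l2]
  simp only [ENNReal.toReal_ofReal (sq_nonneg _)]

lemma ofReal_conv_le_econv {f k : G → ℝ} (hf : ∀ g, 0 ≤ f g) (hk : ∀ g, 0 ≤ k g) (z : G) :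
    ENNReal.ofReal (conv N f k z) ≤ econv N f k z := by
  by_cases hs : Summable fun x : RCos N => f (z * x.out⁻¹) * k x.out
  · rw [conv, ENNReal.ofReal_tsum_of_nonneg (fun x => mul_nonneg (hf _) (hk _)) hs]
    exact le_of_eq (tsum_congr fun x => ENNReal.ofReal_mul (hf _))
  · simp [conv, tsum_eq_zero_of_not_summable hs]

lemma conv_nonneg {f k : G → ℝ} (hf : ∀ g, 0 ≤ f g) (hk : ∀ g, 0 ≤ k g) (z : G) :
    0 ≤ conv N f k z :=
  tsum_nonneg fun _ => mul_nonneg (hf _) (hk _)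

lemma LeftInvariant.conv {N' : Subgroup G} {f k : G → ℝ} (hf : LeftInvariant N' f) :
    LeftInvariant N' (conv N f k) :=
  fun g h hh => tsum_congr fun x => by rw [mul_assoc, hf _ h hh]

variable {φ f k : G → ℝ} (hφ : ∀ g, 0 ≤ φ g) (hf : ∀ g, 0 ≤ f g) (hk : ∀ g, 0 ≤ k g)
include hφ hf hk

lemma E2_le_of_l2_le (hφt : E2 N φ ≠ ⊤) (hft : E2 N f ≠ ⊤) (hkt : E2 N k ≠ ⊤) {c : ℝ}
    (h : l2 N φ ≤ c * l2 N f * l2 N k) :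
    E2 N φ ≤ ENNReal.ofReal (c ^ 2) * E2 N f * E2 N k := by
  have hE2 {ψ : G → ℝ} (hψ : ∀ g, 0 ≤ ψ g) (hψt : E2 N ψ ≠ ⊤) :
      E2 N ψ = ENNReal.ofReal (l2 N ψ ^ 2) := by
    rw [l2_eq_sqrt_toReal_E2 hψ, Real.sq_sqrt ENNReal.toReal_nonneg, ENNReal.ofReal_toReal hψt]
  rw [hE2 hφ hφt, hE2 hf hft, hE2 hk hkt, ← ENNReal.ofReal_mul (sq_nonneg c),
    ← ENNReal.ofReal_mul (by positivity), ← mul_pow, ← mul_pow]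
  exact ENNReal.ofReal_le_ofReal (pow_le_pow_left₀ (l2_nonneg φ) h 2)

lemma l2_le_of_E2_le (hft : E2 N f ≠ ⊤) (hkt : E2 N k ≠ ⊤) {c : ℝ}
    (h : E2 N φ ≤ ENNReal.ofReal (c ^ 2) * E2 N f * E2 N k) :
    l2 N φ ≤ |c| * l2 N f * l2 N k := by
  rw [l2_eq_sqrt_toReal_E2 hφ, l2_eq_sqrt_toReal_E2 hf, l2_eq_sqrt_toReal_E2 hk,
    ← Real.sqrt_sq_eq_abs, ← Real.sqrt_mul (sq_nonneg c), ← Real.sqrt_mul (by positivity)]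
  refine Real.sqrt_le_sqrt ?_
  have := ENNReal.toReal_mono
    (ENNReal.mul_ne_top (ENNReal.mul_ne_top ENNReal.ofReal_ne_top hft) hkt) h
  rwa [ENNReal.toReal_mul, ENNReal.toReal_mul, ENNReal.toReal_ofReal (sq_nonneg c)] at this

end SquareNorms

section HeckeFunctions

variable {N : Subgroup G}

structure IsHeckeFun (N : Subgroup G) (f : G → ℝ) : Prop where
  nonneg : ∀ g, 0 ≤ f g
  biInvariant : BiInvariant N f
  finDosetSupp : FinDosetSupp N f

structure IsL2Fun (N : Subgroup G) (k : G → ℝ) : Prop where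
  nonneg : ∀ g, 0 ≤ k g
  leftInvariant : LeftInvariant N k
  summable : Summable fun x : RCos N => k x.out ^ 2

lemma heckeRDwrt_iff {L : G → ℝ} :
    HeckeRDwrt N L ↔ ∃ P : Polynomial ℝ, ∀ r, 0 < r → ∀ f k, IsHeckeFun N f →
      (∀ g, f g ≠ 0 → L g ≤ r) → IsL2Fun N k →
        l2 N (conv N f k) ≤ P.eval r * l2 N f * l2 N k :=
  exists_congr fun _ => forall₂_congr fun _ _ => forall₂_congr fun _ _ =>
    ⟨fun h hf hfL hk => h hf.1 hf.2 hf.3 hfL hk.1 hk.2 hk.3,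
      fun h h₁ h₂ h₃ h₄ h₅ h₆ h₇ => h ⟨h₁, h₂, h₃⟩ h₄ ⟨h₅, h₆, h₇⟩⟩

lemma IsL2Fun.E2_ne_top {k : G → ℝ} (hk : IsL2Fun N k) : E2 N k ≠ ⊤ :=
  (E2_ne_top_iff hk.nonneg).2 hk.summable

namespace IsHeckeFun

variable {f : G → ℝ} (hf : IsHeckeFun N f)
include hf

lemma leftInvariant : LeftInvariant N f := (biInvariant_iff.1 hf.biInvariant).1

lemma rightInvariant : RightInvariant N f := (biInvariant_iff.1 hf.biInvariant).2

lemma inv : IsHeckeFun N fun g => f g⁻¹ where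
  nonneg _ := hf.nonneg _
  biInvariant g a ha b hb := by
    simpa [mul_assoc] using hf.biInvariant g⁻¹ b⁻¹ (N.inv_mem hb) a⁻¹ (N.inv_mem ha)
  finDosetSupp := by
    obtain ⟨C, hC, hcover⟩ := finDosetSupp_iff.1 hf.finDosetSupp
    refine finDosetSupp_iff.2 ⟨C⁻¹, hC.inv, fun z hz => ?_⟩
    obtain ⟨c, hc, hzc⟩ := hcover _ hz
    exact ⟨c⁻¹, Set.inv_mem_inv.2 hc, by simpa using inv_mem_doubleCoset hzc⟩

variable (hN : AlmostNormal N)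
include hN

lemma finite_support_out : {x : RCos N | f x.out ≠ 0}.Finite := by
  obtain ⟨C, hC, hcover⟩ := finDosetSupp_iff.1 hf.finDosetSupp
  refine (hC.biUnion fun c _ => hN.finite_mk_image_doubleCoset c).subset fun x hx => ?_
  obtain ⟨c, hc, hxc⟩ := hcover _ hx
  exact Set.mem_biUnion hc ⟨x.out, hxc, RCos.mk_out N x⟩

lemma finite_support_mul_out_inv (z : G) : {x : RCos N | f (z * x.out⁻¹) ≠ 0}.Finite := by
  refine ((hf.inv.finite_support_out hN).preimage_embedding
    (RCos.mulRight N z⁻¹).toEmbedding).subset fun x hx => ?_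
  simpa [RCos.mulRight_apply, hf.inv.leftInvariant.out_mk] using hx

lemma tsum_ofReal_ne_top : ∑' x : RCos N, ENNReal.ofReal (f x.out) ≠ ⊤ :=
  tsum_ne_top_of_support_finite
    ((hf.finite_support_out hN).subset fun _ hx h0 => hx (by simp [h0]))
    fun _ => ENNReal.ofReal_ne_top

lemma E2_ne_top : E2 N f ≠ ⊤ :=
  tsum_ne_top_of_support_finite
    ((hf.finite_support_out hN).subset fun _ hx h0 => hx (by simp [h0]))
    fun _ => ENNReal.pow_ne_top ENNReal.ofReal_ne_top

lemma ofReal_conv_eq_econv {k : G → ℝ} (hk : ∀ g, 0 ≤ k g) (z : G) :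
    ENNReal.ofReal (conv N f k z) = econv N f k z := by
  have hs : Summable fun x : RCos N => f (z * x.out⁻¹) * k x.out :=
    summable_of_hasFiniteSupport ((hf.finite_support_mul_out_inv hN z).subset
      fun x hx => left_ne_zero_of_mul hx)
  rw [conv, ENNReal.ofReal_tsum_of_nonneg (fun x => mul_nonneg (hf.nonneg _) (hk _)) hs]
  exact tsum_congr fun x => ENNReal.ofReal_mul (hf.nonneg _)

/-- Schur's test, the row and column sums being the `ℓ¹`-norms of `g ↦ f g⁻¹` and of `f`. -/
lemma E2_conv_ne_top {k : G → ℝ} (hk : IsL2Fun N k) : E2 N (conv N f k) ≠ ⊤ := by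
  have hrow (z : RCos N) : ∑' x : RCos N, ENNReal.ofReal (f (z.out * x.out⁻¹)) =
      ∑' x : RCos N, ENNReal.ofReal (f x.out⁻¹) := by
    simpa using (hf.inv.leftInvariant.comp ENNReal.ofReal).tsum_out_mul z.out⁻¹
  have hcol (x : RCos N) : ∑' z : RCos N, ENNReal.ofReal (f (z.out * x.out⁻¹)) =
      ∑' z : RCos N, ENNReal.ofReal (f z.out) :=
    (hf.leftInvariant.comp ENNReal.ofReal).tsum_out_mul x.out⁻¹
  have hbound : E2 N (conv N f k) ≤ 2 * (∑' x : RCos N, ENNReal.ofReal (f x.out⁻¹)) *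
      (∑' z : RCos N, ENNReal.ofReal (f z.out)) * E2 N k :=
    calc E2 N (conv N f k) ≤ ∑' z : RCos N, econv N f k z.out ^ 2 :=
          ENNReal.tsum_le_tsum fun z =>
            pow_le_pow_left' (ofReal_conv_le_econv hf.nonneg hk.nonneg z.out) 2
      _ ≤ _ := tsum_sq_tsum_mul_le _ _ (fun z => (hrow z).le) fun x => (hcol x).le
  refine ne_top_of_le_ne_top ?_ hbound
  exact ENNReal.mul_ne_top (ENNReal.mul_ne_top (ENNReal.mul_ne_top ENNReal.ofNat_ne_top
    (hf.inv.tsum_ofReal_ne_top hN)) (hf.tsum_ofReal_ne_top hN)) hk.E2_ne_top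

end IsHeckeFun

/-- Property (RD) for squared norms in `ℝ≥0∞`, with `B r` bounding the square of the constant. -/
def ConvBound (N : Subgroup G) (L : G → ℝ) (B : ℝ → ℝ≥0∞) : Prop :=
  ∀ r, 0 < r → ∀ f k, IsHeckeFun N f → (∀ g, f g ≠ 0 → L g ≤ r) → IsL2Fun N k →
    E2 N (conv N f k) ≤ B r * E2 N f * E2 N k

variable {L : G → ℝ}

lemma ConvBound.mono {B B' : ℝ → ℝ≥0∞} (h : ConvBound N L B) (hB : ∀ r, B r ≤ B' r) :
    ConvBound N L B' :=
  fun r hr f k hf hfL hk => (h r hr f k hf hfL hk).trans (by gcongr; exact hB r)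

lemma ConvBound.exists_poly {c : ℕ} {P : Polynomial ℝ}
    (h : ConvBound N L fun r => c * ENNReal.ofReal (P.eval r ^ 2)) :
    ∃ Q : Polynomial ℝ, ConvBound N L fun r => ENNReal.ofReal (Q.eval r ^ 2) := by
  refine ⟨Polynomial.C (c : ℝ) * P, h.mono fun r => ?_⟩
  rw [Polynomial.eval_mul, Polynomial.eval_C, mul_pow, ENNReal.ofReal_mul (by positivity),
    ENNReal.ofReal_pow (Nat.cast_nonneg c), ENNReal.ofReal_natCast]
  gcongr
  exact_mod_cast Nat.le_self_pow two_ne_zero c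

theorem heckeRDwrt_iff_exists_convBound (hN : AlmostNormal N) :
    HeckeRDwrt N L ↔
      ∃ P : Polynomial ℝ, ConvBound N L fun r => ENNReal.ofReal (P.eval r ^ 2) := by
  rw [heckeRDwrt_iff]
  constructor
  · rintro ⟨P, hP⟩
    exact ⟨P, fun r hr f k hf hfL hk =>
      E2_le_of_l2_le (conv_nonneg hf.nonneg hk.nonneg) hf.nonneg hk.nonneg
        (hf.E2_conv_ne_top hN hk) (hf.E2_ne_top hN) hk.E2_ne_top (hP r hr f k hf hfL hk)⟩
  · rintro ⟨P, hP⟩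
    refine ⟨P ^ 2 + 1, fun r hr f k hf hfL hk => (l2_le_of_E2_le
      (conv_nonneg hf.nonneg hk.nonneg) hf.nonneg hk.nonneg (hf.E2_ne_top hN) hk.E2_ne_top
      (hP r hr f k hf hfL hk)).trans ?_⟩
    have habs : |P.eval r| ≤ (P ^ 2 + 1).eval r := by
      simp only [Polynomial.eval_add, Polynomial.eval_pow, Polynomial.eval_one]
      nlinarith [sq_abs (P.eval r), sq_nonneg (|P.eval r| - 1)]
    exact mul_le_mul_of_nonneg_right (mul_le_mul_of_nonneg_right habs (l2_nonneg f))
      (l2_nonneg k)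

end HeckeFunctions

section FiniteIndex

variable {M H : Subgroup G}

lemma IsLengthFunction.map_mul_mul {L : G → ℝ} (hL : IsLengthFunction L)
    (hLH : ∀ h ∈ H, L h = 0) {a b : G} (ha : a ∈ H) (hb : b ∈ H) (z : G) :
    L (a * z * b) = L z := by
  have hle (a b z : G) (ha : a ∈ H) (hb : b ∈ H) : L (a * z * b) ≤ L z := by
    linarith [hL.subadd (a * z) b, hL.subadd a z, hLH a ha, hLH b hb]
  refine le_antisymm (hle a b z ha hb) ?_
  simpa [mul_assoc] using hle a⁻¹ b⁻¹ (a * z * b) (H.inv_mem ha) (H.inv_mem hb)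

lemma leftInvariant_convSummand {f k : G → ℝ} (hf : RightInvariant M f)
    (hk : LeftInvariant M k) (z : G) :
    LeftInvariant M fun w => ENNReal.ofReal (f (z * w⁻¹)) * ENNReal.ofReal (k w) :=
  fun w m hm => by simp only [mul_inv_rev, ← mul_assoc, hf _ _ (M.inv_mem hm), hk w m hm]

lemma exists_eq_out_mul {h : G} (hh : h ∈ H) :
    ∃ v : H ⧸ M.subgroupOf H, ∃ m ∈ M, h = v.out * m := by
  obtain ⟨m, hm⟩ := QuotientGroup.mk_out_eq_mul (M.subgroupOf H) ⟨h, hh⟩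
  refine ⟨QuotientGroup.mk ⟨h, hh⟩, _, M.inv_mem (Subgroup.mem_subgroupOf.1 m.2), ?_⟩
  rw [hm]
  push_cast
  group

/-- `M x ↦ (h⁻¹ M, H x)`, where `x = h y` with `y` the representative of `H x`, embeds `M\G` into
`(H/M) × (H\G)`. -/
lemma tsum_out_le_tsum_tsum {φ : G → ℝ≥0∞} (hφ : LeftInvariant M φ) :
    ∑' x : RCos M, φ x.out ≤
      ∑' v : H ⧸ M.subgroupOf H, ∑' y : RCos H, φ ((v.out : G)⁻¹ * y.out) := by
  let ι : RCos M → (H ⧸ M.subgroupOf H) × RCos H := fun x =>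
    (QuotientGroup.mk ⟨(RCos.mk H x.out).out * x.out⁻¹, RCos.out_mk_mul_inv_mem H _⟩,
      RCos.mk H x.out)
  have hι : Function.Injective ι := by
    intro x x' h
    obtain ⟨h₁, h₂⟩ := Prod.mk.inj h
    simp only [h₂, QuotientGroup.eq, Subgroup.mem_subgroupOf] at h₁
    rw [← RCos.mk_out M x, ← RCos.mk_out M x', RCos.mk_eq_mk]
    convert M.inv_mem h₁ using 1
    push_cast
    group
  have hval (x : RCos M) : φ (((ι x).1.out : G)⁻¹ * (ι x).2.out) = φ x.out := by
    obtain ⟨m, hm⟩ := QuotientGroup.mk_out_eq_mul (M.subgroupOf H)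
      ⟨(RCos.mk H x.out).out * x.out⁻¹, RCos.out_mk_mul_inv_mem H _⟩
    simp only [ι, hm]
    push_cast
    rw [show ((RCos.mk H x.out).out * x.out⁻¹ * m)⁻¹ * (RCos.mk H x.out).out =
      ((m : H) : G)⁻¹ * x.out by group]
    exact hφ _ _ (M.inv_mem (Subgroup.mem_subgroupOf.1 m.2))
  calc ∑' x : RCos M, φ x.out
      = ∑' x : RCos M, (fun p : (H ⧸ M.subgroupOf H) × RCos H =>
          φ ((p.1.out : G)⁻¹ * p.2.out)) (ι x) := tsum_congr fun x => (hval x).symm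
    _ ≤ ∑' p : (H ⧸ M.subgroupOf H) × RCos H, φ ((p.1.out : G)⁻¹ * p.2.out) :=
        ENNReal.tsum_comp_le_tsum_of_injective hι _
    _ = _ := ENNReal.tsum_prod (f := fun (v : H ⧸ M.subgroupOf H) (y : RCos H) =>
          φ ((v.out : G)⁻¹ * y.out))

variable (hMH : M ≤ H)
include hMH

lemma tsum_mul_out_le {φ : G → ℝ≥0∞} (hφ : LeftInvariant M φ) {a : G} (ha : a ∈ H) :
    ∑' y : RCos H, φ (a * y.out) ≤ ∑' x : RCos M, φ x.out := by
  have hinj : Function.Injective fun y : RCos H => RCos.mk M (a * y.out) := by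
    intro y y' h
    rw [← RCos.mk_out H y, ← RCos.mk_out H y', RCos.mk_eq_mk]
    convert H.mul_mem (H.mul_mem (H.inv_mem ha) (hMH ((RCos.mk_eq_mk M).1 h))) ha using 1
    group
  calc ∑' y : RCos H, φ (a * y.out) = ∑' y : RCos H, φ (RCos.mk M (a * y.out)).out :=
        tsum_congr fun y => (hφ.out_mk _).symm
    _ ≤ ∑' x : RCos M, φ x.out := ENNReal.tsum_comp_le_tsum_of_injective hinj _

lemma E2_le_E2_of_le {ψ : G → ℝ} (hψ : LeftInvariant M ψ) : E2 H ψ ≤ E2 M ψ := by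
  simpa [E2] using tsum_mul_out_le hMH (hψ.comp fun t => ENNReal.ofReal t ^ 2) H.one_mem

lemma econv_le_econv_of_le {f k : G → ℝ} (hf : RightInvariant M f) (hk : LeftInvariant M k) (z : G) :
    econv H f k z ≤ econv M f k z := by
  simpa [econv] using tsum_mul_out_le hMH (leftInvariant_convSummand hf hk z) H.one_mem

end FiniteIndex

section Hulls

variable {M H : Subgroup G} [Fintype (H ⧸ M.subgroupOf H)]

lemma sum_mul_out_eq {X : Type*} [AddCommMonoid X] {φ : G → X} (hφ : RightInvariant M φ)
    {a : G} (ha : a ∈ H) :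
    ∑ v : H ⧸ M.subgroupOf H, φ (a * v.out) = ∑ v : H ⧸ M.subgroupOf H, φ v.out := by
  refine (Finset.sum_congr rfl fun v _ => ?_).trans
    (Equiv.sum_comp (MulAction.toPerm (⟨a, ha⟩ : H)) fun v : H ⧸ M.subgroupOf H => φ v.out)
  obtain ⟨m, hm⟩ := QuotientGroup.mk_out_eq_mul (M.subgroupOf H) (⟨a, ha⟩ * v.out)
  have hv : MulAction.toPerm (⟨a, ha⟩ : H) v = QuotientGroup.mk (⟨a, ha⟩ * v.out) := by
    conv_lhs => rw [← QuotientGroup.out_eq' v]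
    rfl
  rw [hv, hm]
  push_cast
  rw [hφ _ _ (Subgroup.mem_subgroupOf.1 m.2)]

lemma tsum_out_le_card_mul (hMH : M ≤ H) {ψ : G → ℝ≥0∞} (hψ : LeftInvariant H ψ) :
    ∑' x : RCos M, ψ x.out ≤ Fintype.card (H ⧸ M.subgroupOf H) * ∑' y : RCos H, ψ y.out :=
  calc ∑' x : RCos M, ψ x.out
      ≤ ∑' v : H ⧸ M.subgroupOf H, ∑' y : RCos H, ψ ((v.out : G)⁻¹ * y.out) :=
        tsum_out_le_tsum_tsum (hψ.mono hMH)
    _ = ∑' _ : H ⧸ M.subgroupOf H, ∑' y : RCos H, ψ y.out :=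
        tsum_congr fun v => tsum_congr fun y => hψ _ _ (H.inv_mem v.out.2)
    _ = _ := by rw [tsum_fintype, Finset.sum_const, Finset.card_univ, nsmul_eq_mul]

lemma E2_le_card_mul (hMH : M ≤ H) {ψ : G → ℝ} (hψ : LeftInvariant H ψ) :
    E2 M ψ ≤ Fintype.card (H ⧸ M.subgroupOf H) * E2 H ψ :=
  tsum_out_le_card_mul hMH (hψ.comp fun t => ENNReal.ofReal t ^ 2)

variable (M H)

/-- `(v.out)⁻¹` runs over representatives of the right cosets of `M` in `H`. -/
def leftHull (φ : G → ℝ) (z : G) : ℝ :=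
  ∑ v : H ⧸ M.subgroupOf H, φ ((v.out : G)⁻¹ * z)

def rightHull (φ : G → ℝ) (z : G) : ℝ :=
  ∑ v : H ⧸ M.subgroupOf H, φ (z * v.out)

variable {M H} {φ : G → ℝ}

lemma leftHull_nonneg (hφ : ∀ g, 0 ≤ φ g) (z : G) : 0 ≤ leftHull M H φ z :=
  Finset.sum_nonneg fun _ _ => hφ _

lemma rightHull_nonneg (hφ : ∀ g, 0 ≤ φ g) (z : G) : 0 ≤ rightHull M H φ z :=
  Finset.sum_nonneg fun _ _ => hφ _

lemma LeftInvariant.leftHull (hφ : LeftInvariant M φ) : LeftInvariant H (leftHull M H φ) := by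
  intro z a ha
  have hψ : RightInvariant M fun w => φ (w⁻¹ * z) := fun w m hm => by
    simp only [mul_inv_rev, mul_assoc, hφ _ _ (M.inv_mem hm)]
  simpa [HeckeRDPaper.leftHull, mul_assoc] using sum_mul_out_eq hψ (H.inv_mem ha)

lemma RightInvariant.leftHull {N : Subgroup G} (hφ : RightInvariant N φ) :
    RightInvariant N (leftHull M H φ) :=
  fun z b hb => Finset.sum_congr rfl fun v _ => by rw [← mul_assoc, hφ _ _ hb]

lemma RightInvariant.rightHull (hφ : RightInvariant M φ) :
    RightInvariant H (rightHull M H φ) := by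
  intro z b hb
  have hψ : RightInvariant M fun w => φ (z * w) := fun w m hm => by
    simp only [← mul_assoc, hφ _ _ hm]
  simpa [HeckeRDPaper.rightHull, mul_assoc] using sum_mul_out_eq hψ hb

lemma LeftInvariant.rightHull {N : Subgroup G} (hφ : LeftInvariant N φ) :
    LeftInvariant N (rightHull M H φ) :=
  fun z a ha => Finset.sum_congr rfl fun v _ => by rw [mul_assoc, hφ _ _ ha]

lemma le_rightHull (hφ : ∀ g, 0 ≤ φ g) (z : G) (v : H ⧸ M.subgroupOf H) :
    φ (z * v.out) ≤ rightHull M H φ z :=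
  Finset.single_le_sum (f := fun v : H ⧸ M.subgroupOf H => φ (z * v.out)) (fun _ _ => hφ _)
    (Finset.mem_univ v)

lemma le_leftHull (hφ0 : ∀ g, 0 ≤ φ g) (hφ : LeftInvariant M φ) (z : G) :
    φ z ≤ leftHull M H φ z := by
  obtain ⟨m, hm⟩ := QuotientGroup.mk_out_eq_mul (M.subgroupOf H) 1
  calc φ z = φ (((QuotientGroup.mk 1 : H ⧸ M.subgroupOf H).out : G)⁻¹ * z) := by
        rw [hm]
        push_cast
        rw [one_mul, hφ _ _ (M.inv_mem (Subgroup.mem_subgroupOf.1 m.2))]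
    _ ≤ leftHull M H φ z :=
        Finset.single_le_sum (f := fun v : H ⧸ M.subgroupOf H => φ ((v.out : G)⁻¹ * z))
          (fun _ _ => hφ0 _) (Finset.mem_univ _)

lemma E2_leftHull_le (hMH : M ≤ H) (hφ0 : ∀ g, 0 ≤ φ g) (hφ : LeftInvariant M φ) :
    E2 H (leftHull M H φ) ≤
      Fintype.card (H ⧸ M.subgroupOf H) * Fintype.card (H ⧸ M.subgroupOf H) * E2 M φ :=
  calc E2 H (leftHull M H φ)
      ≤ ∑' y : RCos H, (Fintype.card (H ⧸ M.subgroupOf H) : ℝ≥0∞) *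
          ∑ v : H ⧸ M.subgroupOf H, ENNReal.ofReal (φ ((v.out : G)⁻¹ * y.out)) ^ 2 :=
        ENNReal.tsum_le_tsum fun _ => by
          simpa [leftHull] using ofReal_sum_sq_le Finset.univ fun _ => hφ0 _
    _ = Fintype.card (H ⧸ M.subgroupOf H) * ∑ v : H ⧸ M.subgroupOf H,
          ∑' y : RCos H, ENNReal.ofReal (φ ((v.out : G)⁻¹ * y.out)) ^ 2 := by
        rw [ENNReal.tsum_mul_left, Summable.tsum_finsetSum fun _ _ => ENNReal.summable]
    _ ≤ Fintype.card (H ⧸ M.subgroupOf H) * ∑ _v : H ⧸ M.subgroupOf H, E2 M φ := by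
        gcongr with v
        exact tsum_mul_out_le hMH (hφ.comp fun t => ENNReal.ofReal t ^ 2) (H.inv_mem v.out.2)
    _ = _ := by rw [Finset.sum_const, Finset.card_univ, nsmul_eq_mul, mul_assoc]

lemma E2_rightHull_le (hφ0 : ∀ g, 0 ≤ φ g) (hφ : LeftInvariant M φ) :
    E2 M (rightHull M H φ) ≤
      Fintype.card (H ⧸ M.subgroupOf H) * Fintype.card (H ⧸ M.subgroupOf H) * E2 M φ :=
  calc E2 M (rightHull M H φ)
      ≤ ∑' x : RCos M, (Fintype.card (H ⧸ M.subgroupOf H) : ℝ≥0∞) *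
          ∑ v : H ⧸ M.subgroupOf H, ENNReal.ofReal (φ (x.out * v.out)) ^ 2 :=
        ENNReal.tsum_le_tsum fun _ => by
          simpa [rightHull] using ofReal_sum_sq_le Finset.univ fun _ => hφ0 _
    _ = Fintype.card (H ⧸ M.subgroupOf H) * ∑ v : H ⧸ M.subgroupOf H,
          ∑' x : RCos M, ENNReal.ofReal (φ (x.out * v.out)) ^ 2 := by
        rw [ENNReal.tsum_mul_left, Summable.tsum_finsetSum fun _ _ => ENNReal.summable]
    _ = Fintype.card (H ⧸ M.subgroupOf H) * ∑ _v : H ⧸ M.subgroupOf H, E2 M φ := by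
        congr 1
        exact Finset.sum_congr rfl fun v _ =>
          (hφ.comp fun t => ENNReal.ofReal t ^ 2).tsum_out_mul _
    _ = _ := by rw [Finset.sum_const, Finset.card_univ, nsmul_eq_mul, mul_assoc]

end Hulls

section Transfer

variable {M H : Subgroup G} [Fintype (H ⧸ M.subgroupOf H)] {f k : G → ℝ}

lemma IsHeckeFun.to_subgroup (hMH : M ≤ H) (hf : IsHeckeFun H f) : IsHeckeFun M f where
  nonneg := hf.nonneg
  biInvariant := hf.biInvariant.mono hMH
  finDosetSupp := by
    obtain ⟨C, hC, hcover⟩ := finDosetSupp_iff.1 hf.finDosetSupp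
    refine finDosetSupp_iff.2 ⟨⋃ c ∈ C, Set.range fun p : (H ⧸ M.subgroupOf H) ×
      (H ⧸ M.subgroupOf H) => (p.1.out : G)⁻¹ * c * p.2.out,
      hC.biUnion fun c _ => Set.finite_range _, fun z hz => ?_⟩
    obtain ⟨c, hc, hzc⟩ := hcover z hz
    obtain ⟨a, ha, b, hb, rfl⟩ := mem_doubleCoset.1 hzc
    obtain ⟨u, m, hm, hu⟩ := exists_eq_out_mul (M := M) (H.inv_mem ha)
    obtain ⟨v, m', hm', hv⟩ := exists_eq_out_mul (M := M) hb
    refine ⟨_, Set.mem_biUnion hc ⟨(u, v), rfl⟩, mem_doubleCoset.2 ⟨m⁻¹, M.inv_mem hm, m', hm', ?_⟩⟩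
    rw [hv, show a = m⁻¹ * (u.out : G)⁻¹ by rw [← mul_inv_rev, ← hu, inv_inv]]
    group

lemma IsL2Fun.to_subgroup (hMH : M ≤ H) (hk : IsL2Fun H k) : IsL2Fun M k where
  nonneg := hk.nonneg
  leftInvariant := hk.leftInvariant.mono hMH
  summable := (E2_ne_top_iff hk.nonneg).1 <| ne_top_of_le_ne_top
    (ENNReal.mul_ne_top (ENNReal.natCast_ne_top _) hk.E2_ne_top)
    (E2_le_card_mul hMH hk.leftInvariant)

lemma IsHeckeFun.leftHull_rightHull (hMH : M ≤ H) (hf : IsHeckeFun M f) :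
    IsHeckeFun H (leftHull M H (rightHull M H f)) where
  nonneg := leftHull_nonneg (rightHull_nonneg hf.nonneg)
  biInvariant := biInvariant_iff.2
    ⟨hf.leftInvariant.rightHull.leftHull, hf.rightInvariant.rightHull.leftHull⟩
  finDosetSupp := by
    obtain ⟨C, hC, hcover⟩ := finDosetSupp_iff.1 hf.finDosetSupp
    refine finDosetSupp_iff.2 ⟨C, hC, fun z hz => ?_⟩
    obtain ⟨u, -, hu⟩ := Finset.exists_ne_zero_of_sum_ne_zero hz
    obtain ⟨v, -, hv⟩ := Finset.exists_ne_zero_of_sum_ne_zero hu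
    obtain ⟨c, hc, hzc⟩ := hcover _ hv
    exact ⟨c, hc, mem_doubleCoset_of_mul_mul_mem (H.inv_mem u.out.2) v.out.2
      (doubleCoset_mono hMH c hzc)⟩

lemma IsL2Fun.leftHull (hMH : M ≤ H) (hk : IsL2Fun M k) : IsL2Fun H (leftHull M H k) where
  nonneg := leftHull_nonneg hk.nonneg
  leftInvariant := hk.leftInvariant.leftHull
  summable := (E2_ne_top_iff (leftHull_nonneg hk.nonneg)).1 <| ne_top_of_le_ne_top
    (ENNReal.mul_ne_top (ENNReal.mul_ne_top (ENNReal.natCast_ne_top _)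
      (ENNReal.natCast_ne_top _)) hk.E2_ne_top) (E2_leftHull_le hMH hk.nonneg hk.leftInvariant)

lemma ofReal_conv_le_ofReal_conv_hulls (hMH : M ≤ H) (hH : AlmostNormal H) (hf : IsHeckeFun M f)
    (hk : IsL2Fun M k) (z : G) :
    ENNReal.ofReal (conv M f k z) ≤
      ENNReal.ofReal (conv H (leftHull M H (rightHull M H f)) (leftHull M H k) z) := by
  rw [(hf.leftHull_rightHull hMH).ofReal_conv_eq_econv hH (leftHull_nonneg hk.nonneg)]
  have hf' (w : G) (v : H ⧸ M.subgroupOf H) :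
      f (w * v.out) ≤ leftHull M H (rightHull M H f) w :=
    (le_rightHull hf.nonneg w v).trans
      (le_leftHull (rightHull_nonneg hf.nonneg) hf.leftInvariant.rightHull w)
  calc ENNReal.ofReal (conv M f k z) ≤ econv M f k z :=
        ofReal_conv_le_econv hf.nonneg hk.nonneg z
    _ ≤ ∑' v : H ⧸ M.subgroupOf H, ∑' y : RCos H,
          ENNReal.ofReal (f (z * ((v.out : G)⁻¹ * y.out)⁻¹)) *
            ENNReal.ofReal (k ((v.out : G)⁻¹ * y.out)) :=
        tsum_out_le_tsum_tsum (leftInvariant_convSummand hf.rightInvariant hk.leftInvariant z)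
    _ = ∑' y : RCos H, ∑ v : H ⧸ M.subgroupOf H, ENNReal.ofReal (f (z * y.out⁻¹ * v.out)) *
          ENNReal.ofReal (k ((v.out : G)⁻¹ * y.out)) := by
        rw [ENNReal.tsum_comm]
        simp only [tsum_fintype, mul_inv_rev, inv_inv, mul_assoc]
    _ ≤ ∑' y : RCos H, ENNReal.ofReal (leftHull M H (rightHull M H f) (z * y.out⁻¹)) *
          ∑ v : H ⧸ M.subgroupOf H, ENNReal.ofReal (k ((v.out : G)⁻¹ * y.out)) := by
        gcongr with y
        rw [Finset.mul_sum]
        gcongr with v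
        exact hf' _ v
    _ = econv H (leftHull M H (rightHull M H f)) (leftHull M H k) z :=
        tsum_congr fun y => by
          congr 1
          rw [leftHull, ENNReal.ofReal_sum_of_nonneg fun v _ => hk.nonneg _]

variable {L : G → ℝ} {B : ℝ → ℝ≥0∞} (hMH : M ≤ H)
include hMH

theorem ConvBound.of_subgroup (hM : AlmostNormal M) (h : ConvBound M L B) :
    ConvBound H L fun r => ((Fintype.card (H ⧸ M.subgroupOf H) ^ 2 : ℕ) : ℝ≥0∞) * B r := by
  intro r hr f k hf hfL hk
  set n := Fintype.card (H ⧸ M.subgroupOf H)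
  have hfM := hf.to_subgroup hMH
  have hkM := hk.to_subgroup hMH
  have hconv (z : G) : ENNReal.ofReal (conv H f k z) ≤ ENNReal.ofReal (conv M f k z) := by
    rw [hfM.ofReal_conv_eq_econv hM hk.nonneg]
    exact (ofReal_conv_le_econv hf.nonneg hk.nonneg z).trans
      (econv_le_econv_of_le hMH hfM.rightInvariant hkM.leftInvariant z)
  calc E2 H (conv H f k) ≤ E2 H (conv M f k) := E2_mono hconv
    _ ≤ E2 M (conv M f k) := E2_le_E2_of_le hMH hfM.leftInvariant.conv
    _ ≤ B r * E2 M f * E2 M k := h r hr f k hfM hfL hkM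
    _ ≤ B r * (n * E2 H f) * (n * E2 H k) := by
        gcongr
        · exact E2_le_card_mul hMH hf.leftInvariant
        · exact E2_le_card_mul hMH hk.leftInvariant
    _ = _ := by push_cast; ring

theorem ConvBound.to_subgroup (hH : AlmostNormal H) (hL : IsLengthFunction L)
    (hLH : ∀ h ∈ H, L h = 0) (h : ConvBound H L B) :
    ConvBound M L fun r => ((Fintype.card (H ⧸ M.subgroupOf H) ^ 7 : ℕ) : ℝ≥0∞) * B r := by
  intro r hr f k hf hfL hk
  set n := Fintype.card (H ⧸ M.subgroupOf H)
  have hf' := hf.leftHull_rightHull hMH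
  have hk' := hk.leftHull hMH
  have hf'L (z : G) (hz : leftHull M H (rightHull M H f) z ≠ 0) : L z ≤ r := by
    obtain ⟨u, -, hu⟩ := Finset.exists_ne_zero_of_sum_ne_zero hz
    obtain ⟨v, -, hv⟩ := Finset.exists_ne_zero_of_sum_ne_zero hu
    rw [← hL.map_mul_mul hLH (H.inv_mem u.out.2) v.out.2 z]
    exact hfL _ hv
  calc E2 M (conv M f k)
      ≤ E2 M (conv H (leftHull M H (rightHull M H f)) (leftHull M H k)) :=
        E2_mono (ofReal_conv_le_ofReal_conv_hulls hMH hH hf hk)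
    _ ≤ n * E2 H (conv H (leftHull M H (rightHull M H f)) (leftHull M H k)) :=
        E2_le_card_mul hMH hf'.leftInvariant.conv
    _ ≤ n * (B r * E2 H (leftHull M H (rightHull M H f)) * E2 H (leftHull M H k)) := by
        gcongr
        exact h r hr _ _ hf' hf'L hk'
    _ ≤ n * (B r * (n * n * (n * n * E2 M f)) * (n * n * E2 M k)) := by
        gcongr
        · exact (E2_leftHull_le hMH (rightHull_nonneg hf.nonneg) hf.leftInvariant.rightHull).trans
            (by gcongr; exact E2_rightHull_le hf.nonneg hf.leftInvariant)
        · exact E2_leftHull_le hMH hk.nonneg hk.leftInvariant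
    _ = _ := by push_cast; ring

end Transfer

theorem heckeRDwrt_iff_of_le {M H : Subgroup G} {L : G → ℝ} (hMH : M ≤ H)
    (hfin : M.relIndex H ≠ 0) (hH : AlmostNormal H) (hL : IsLengthFunction L)
    (hLH : ∀ h ∈ H, L h = 0) :
    HeckeRDwrt H L ↔ HeckeRDwrt M L := by
  have hM : AlmostNormal M := hH.of_commensurable (commensurable_of_le hMH hfin).symm
  have : Finite (H ⧸ M.subgroupOf H) := Nat.finite_of_card_ne_zero hfin
  have := Fintype.ofFinite (H ⧸ M.subgroupOf H)
  rw [heckeRDwrt_iff_exists_convBound hH, heckeRDwrt_iff_exists_convBound hM]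
  exact ⟨fun ⟨_, hP⟩ => (hP.to_subgroup hMH hH hL hLH).exists_poly,
    fun ⟨_, hP⟩ => (hP.of_subgroup hMH hM).exists_poly⟩

section MulEquiv

variable {G' : Type*} [Group G'] (e : G ≃* G')

def RCos.congr (N : Subgroup G) : RCos N ≃ RCos (N.map e.toMonoidHom) :=
  Quotient.congr e.toEquiv fun a b => by
    rw [QuotientGroup.rightRel_apply, QuotientGroup.rightRel_apply, Subgroup.mem_map_equiv]
    simp

variable {N : Subgroup G}

lemma RCos.congr_apply (x : RCos N) : RCos.congr e N x = RCos.mk _ (e x.out) := by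
  conv_lhs => rw [← RCos.mk_out N x]
  rfl

variable {e}

lemma LeftInvariant.comp_mulEquiv {X : Type*} {φ : G' → X}
    (hφ : LeftInvariant (N.map e.toMonoidHom) φ) : LeftInvariant N (φ ∘ e) :=
  fun g h hh => by simpa using hφ (e g) (e h) ⟨h, hh, rfl⟩

lemma LeftInvariant.tsum_out_mulEquiv {Y : Type*} [AddCommMonoid Y] [TopologicalSpace Y]
    {φ : G' → Y} (hφ : LeftInvariant (N.map e.toMonoidHom) φ) :
    ∑' x : RCos N, φ (e x.out) = ∑' x : RCos (N.map e.toMonoidHom), φ x.out := by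
  conv_rhs => rw [← (RCos.congr e N).tsum_eq]
  simp only [RCos.congr_apply, hφ.out_mk]

lemma l2_comp_mulEquiv {φ : G' → ℝ} (hφ : LeftInvariant (N.map e.toMonoidHom) φ) :
    l2 N (φ ∘ e) = l2 (N.map e.toMonoidHom) φ :=
  congrArg Real.sqrt (hφ.comp (· ^ 2)).tsum_out_mulEquiv

lemma conv_comp_mulEquiv {f k : G' → ℝ} (hf : RightInvariant (N.map e.toMonoidHom) f)
    (hk : LeftInvariant (N.map e.toMonoidHom) k) :
    conv N (f ∘ e) (k ∘ e) = conv (N.map e.toMonoidHom) f k ∘ e := by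
  ext z
  have hφ : LeftInvariant (N.map e.toMonoidHom) fun w => f (e z * w⁻¹) * k w :=
    fun w h hh => by simp only [mul_inv_rev, ← mul_assoc, hf _ _ (inv_mem hh), hk w h hh]
  simp only [conv, Function.comp_apply, map_mul, map_inv]
  exact hφ.tsum_out_mulEquiv

lemma IsHeckeFun.comp_mulEquiv {f : G' → ℝ} (hf : IsHeckeFun (N.map e.toMonoidHom) f) :
    IsHeckeFun N (f ∘ e) where
  nonneg _ := hf.nonneg _
  biInvariant g a ha b hb := by
    simpa using hf.biInvariant (e g) (e a) ⟨a, ha, rfl⟩ (e b) ⟨b, hb, rfl⟩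
  finDosetSupp := by
    obtain ⟨C, hC, hcover⟩ := finDosetSupp_iff.1 hf.finDosetSupp
    refine finDosetSupp_iff.2 ⟨e.symm '' C, hC.image _, fun z hz => ?_⟩
    obtain ⟨c, hc, hzc⟩ := hcover (e z) hz
    obtain ⟨a, ha, b, hb, hab⟩ := mem_doubleCoset.1 hzc
    refine ⟨e.symm c, Set.mem_image_of_mem _ hc, mem_doubleCoset.2 ⟨e.symm a,
      Subgroup.mem_map_equiv.1 ha, e.symm b, Subgroup.mem_map_equiv.1 hb, ?_⟩⟩
    simpa using congrArg e.symm hab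

lemma IsL2Fun.comp_mulEquiv {k : G' → ℝ} (hk : IsL2Fun (N.map e.toMonoidHom) k) :
    IsL2Fun N (k ∘ e) where
  nonneg _ := hk.nonneg _
  leftInvariant := hk.leftInvariant.comp_mulEquiv
  summable := ((RCos.congr e N).summable_iff.2 hk.summable).congr fun x => by
    rw [Function.comp_apply, RCos.congr_apply, hk.leftInvariant.out_mk, Function.comp_apply]

theorem HeckeRDwrt.map {L : G → ℝ} (h : HeckeRDwrt N L) :
    HeckeRDwrt (N.map e.toMonoidHom) (L ∘ e.symm) := by
  rw [heckeRDwrt_iff] at h ⊢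
  obtain ⟨P, hP⟩ := h
  refine ⟨P, fun r hr f k hf hfL hk => ?_⟩
  have key := hP r hr (f ∘ e) (k ∘ e) hf.comp_mulEquiv (fun z hz => by simpa using hfL (e z) hz)
    hk.comp_mulEquiv
  rwa [conv_comp_mulEquiv hf.rightInvariant hk.leftInvariant,
    l2_comp_mulEquiv hf.leftInvariant.conv, l2_comp_mulEquiv hf.leftInvariant,
    l2_comp_mulEquiv hk.leftInvariant] at key

end MulEquiv

theorem HeckeRDwrt.of_dominates {N : Subgroup G} {L₁ L₂ : G → ℝ} (h : HeckeRDwrt N L₂)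
    (hd : Dominates L₁ L₂) : HeckeRDwrt N L₁ := by
  obtain ⟨P, hP⟩ := h
  obtain ⟨a, b, ha, hb, hab⟩ := hd
  refine ⟨P.comp (Polynomial.C a * Polynomial.X + Polynomial.C b),
    fun r hr f k h0f hbi hfd hfL => ?_⟩
  simpa using hP (a * r + b) (by positivity) f k h0f hbi hfd fun g hg =>
    (hab g).trans (by gcongr; exact hfL g hg)

theorem heckeRDwrt_conjS_iff {L : G → ℝ} (hL : IsLengthFunction L) (g : G) {K : Subgroup G} :
    HeckeRDwrt (conjS g K) L ↔ HeckeRDwrt K L := by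
  have hconj (g : G) {K : Subgroup G} (h : HeckeRDwrt K L) : HeckeRDwrt (conjS g K) L :=
    (h.map (e := MulAut.conj g)).of_dominates ⟨1, 2 * L g + 1, one_pos,
      by linarith [hL.nonneg g], fun z => by
        simp only [Function.comp_apply, MulAut.conj_symm_apply]
        linarith [hL.subadd (g⁻¹ * z) g, hL.subadd g⁻¹ z, hL.map_inv g]⟩
  exact ⟨fun h => conjS_inv_conjS g K ▸ hconj g⁻¹ h, hconj g⟩

end HeckeRDPaper

open HeckeRDPaper in
theorem stmt10_general {G : Type*} [Group G] (H K : Subgroup G)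
    (hH : AlmostNormal H)
    (g : G) (hcomm : StronglyCommensurable (conjS g K) H)
    (L : G → ℝ) (hL : IsLengthFunction L)
    (hLK : ∀ x ∈ conjS g K, L x = 0) (hLH : ∀ h ∈ H, L h = 0) :
    HeckeRDwrt H L ↔ HeckeRDwrt K L := by
  have hA : AlmostNormal (conjS g K) := hH.of_commensurable hcomm.commensurable.symm
  calc HeckeRDwrt H L ↔ HeckeRDwrt (conjS g K ⊓ H) L :=
        heckeRDwrt_iff_of_le inf_le_right hcomm.2 hH hL hLH
    _ ↔ HeckeRDwrt (conjS g K) L := (heckeRDwrt_iff_of_le inf_le_left hcomm.1 hA hL hLK).symm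
    _ ↔ HeckeRDwrt K L := heckeRDwrt_conjS_iff hL g

open HeckeRDPaper in
/-- If `gKg⁻¹` is strongly commensurable with `H` and `L` vanishes on
`gKg⁻¹ ∪ H`, then `(G,H)` has (RD) w.r.t. `L` iff `(G,K)` does. -/
theorem stmt10 {G : Type*} [Group G] (H K : Subgroup G)
    (hH : AlmostNormal H) (hK : AlmostNormal K)
    (g : G) (hcomm : StronglyCommensurable (conjS g K) H)
    (L : G → ℝ) (hL : IsLengthFunction L)
    (hLK : ∀ x ∈ conjS g K, L x = 0) (hLH : ∀ h ∈ H, L h = 0) :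
    HeckeRDwrt H L ↔ HeckeRDwrt K L :=
  stmt10_general H K hH g hcomm L hL hLK hLH
end
end

section
/- Let φ : G₁ → G₂ be a surjective group homomorphism and let H₁ be an almost normal subgroup of G₁ containing the kernel of φ. Then H₂ := φ(H₁) is an almost normal subgroup of G₂, and if the Hecke pair (G₁,H₁) has property (RD) with respect to a length function L₁, then there is a length function L₂ on (G₂,H₂) satisfying L₂∘φ = L₁ with respect to which the Hecke pair (G₂,H₂) has property (RD). -/
noncomputable section

/-!
Since `ker φ ≤ H₁`, `φ` induces a bijection `H₁\G₁ ≃ H₂\G₂` of right cosets and preserves the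
relative indices `|H₁ : H₁ ∩ gH₁g⁻¹|`. A length function vanishing on `H₁` is constant on the
fibres of `φ`, so it descends to `G₂`. Pulling `f` and `k` back along `φ` preserves every
hypothesis of (RD) and, through the coset bijection, all three `ℓ²`-norms in the inequality,
so (RD) for `(G₂, H₂)` holds with the same polynomial.
-/

namespace HeckeRDPaper

variable {G₁ G₂ : Type*} [Group G₁] [Group G₂]

lemma conjS_map (φ : G₁ →* G₂) (g : G₁) (H : Subgroup G₁) :
    conjS (φ g) (H.map φ) = (conjS g H).map φ := by
  unfold conjS
  rw [Subgroup.map_map, Subgroup.map_map]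
  congr 1
  ext
  simp

lemma le_conjS_of_normal {N H : Subgroup G₁} [N.Normal] (hNH : N ≤ H) (g : G₁) :
    N ≤ conjS g H :=
  fun n hn => ⟨g⁻¹ * n * g, hNH (Subgroup.Normal.conj_mem' ‹_› n hn g), by simp [mul_assoc]⟩

lemma AlmostNormal.map {H : Subgroup G₁} (hH : AlmostNormal H) {φ : G₁ →* G₂}
    (hsurj : Function.Surjective φ) (hker : φ.ker ≤ H) : AlmostNormal (H.map φ) := by
  intro y
  obtain ⟨g, rfl⟩ := hsurj y
  rw [conjS_map, Subgroup.relIndex_map_map, sup_eq_left.2 hker,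
    sup_eq_left.2 (le_conjS_of_normal hker g)]
  exact hH g

lemma IsHeckeLength.apply_mul_of_mem {H : Subgroup G₁} {L : G₁ → ℝ} (hL : IsHeckeLength H L)
    (g : G₁) {h : G₁} (hh : h ∈ H) : L (g * h) = L g := by
  apply le_antisymm
  · simpa [hL.2 h hh] using hL.1.subadd g h
  · simpa [hL.2 h⁻¹ (inv_mem hh)] using hL.1.subadd (g * h) h⁻¹

lemma IsHeckeLength.apply_eq_of_map_eq {H : Subgroup G₁} {L : G₁ → ℝ} (hL : IsHeckeLength H L)
    {φ : G₁ →* G₂} (hker : φ.ker ≤ H) {a b : G₁} (hab : φ a = φ b) : L a = L b := by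
  have hmem : a⁻¹ * b ∈ H := hker (by simp [hab])
  rw [← hL.apply_mul_of_mem a hmem, mul_inv_cancel_left]

lemma exists_comp_eq_of_apply_eq {φ : G₁ →* G₂} (hsurj : Function.Surjective φ) {L : G₁ → ℝ}
    (hL : ∀ a b, φ a = φ b → L a = L b) : ∃ L₂ : G₂ → ℝ, ∀ g, L₂ (φ g) = L g :=
  ⟨L ∘ Function.surjInv hsurj, fun _ => hL _ _ (Function.surjInv_eq hsurj _)⟩

lemma IsHeckeLength.of_comp {H : Subgroup G₁} {L₁ : G₁ → ℝ} (hL₁ : IsHeckeLength H L₁)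
    {φ : G₁ →* G₂} (hsurj : Function.Surjective φ) {L₂ : G₂ → ℝ}
    (hL : ∀ g, L₂ (φ g) = L₁ g) : IsHeckeLength (H.map φ) L₂ := by
  refine ⟨⟨fun y => ?_, ?_, fun y => ?_, fun y z => ?_⟩, ?_⟩
  · obtain ⟨g, rfl⟩ := hsurj y
    exact hL g ▸ hL₁.1.nonneg g
  · rw [← φ.map_one, hL, hL₁.1.map_one]
  · obtain ⟨g, rfl⟩ := hsurj y
    rw [← map_inv, hL, hL, hL₁.1.map_inv]
  · obtain ⟨g, rfl⟩ := hsurj y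
    obtain ⟨g', rfl⟩ := hsurj z
    rw [← map_mul, hL, hL, hL]
    exact hL₁.1.subadd g g'
  · rintro _ ⟨h, hh, rfl⟩
    rw [hL, hL₁.2 h hh]

section RightCosets

variable (φ : G₁ →* G₂) (H : Subgroup G₁)

def rcosMap : RCos H → RCos (H.map φ) :=
  Quotient.map' φ fun a b hab => by
    rw [QuotientGroup.rightRel_apply] at hab ⊢
    simpa using Subgroup.mem_map_of_mem φ hab

variable {φ H}

lemma rcosMap_bijective (hsurj : Function.Surjective φ) (hker : φ.ker ≤ H) :
    Function.Bijective (rcosMap φ H) := by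
  refine ⟨fun x y hxy => ?_, fun y => ?_⟩
  · induction x using Quotient.inductionOn' with | h a =>
    induction y using Quotient.inductionOn' with | h b =>
    obtain ⟨h, hh, hhe⟩ := QuotientGroup.rightRel_apply.1 (Quotient.exact' hxy)
    apply Quotient.sound'
    rw [QuotientGroup.rightRel_apply]
    have hk : h⁻¹ * (b * a⁻¹) ∈ φ.ker := by simp [hhe]
    simpa using mul_mem hh (hker hk)
  · induction y using Quotient.inductionOn' with | h z =>
    obtain ⟨g, rfl⟩ := hsurj z
    exact ⟨Quotient.mk'' g, rfl⟩

def rcosEquiv (hsurj : Function.Surjective φ) (hker : φ.ker ≤ H) : RCos H ≃ RCos (H.map φ) :=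
  Equiv.ofBijective _ (rcosMap_bijective hsurj hker)

-- `Quotient.out` chooses representatives independently on the two sides, so they match only up to
-- `H.map φ`; this is why the transfer lemmas below need left invariance.
lemma exists_mem_map_out_eq (hsurj : Function.Surjective φ) (hker : φ.ker ≤ H) (x : RCos H) :
    ∃ h ∈ H.map φ, φ x.out = h * (rcosEquiv hsurj hker x).out := by
  have hx : rcosEquiv hsurj hker x = Quotient.mk'' (φ x.out) := by
    conv_lhs => rw [← x.out_eq']
    rfl
  have hrel := Quotient.exact' ((rcosEquiv hsurj hker x).out_eq'.trans hx)
  exact ⟨_, QuotientGroup.rightRel_apply.1 hrel, by group⟩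

variable {F : G₂ → ℝ}

lemma apply_rcosEquiv_out (hsurj : Function.Surjective φ) (hker : φ.ker ≤ H)
    (hF : ∀ g, ∀ h ∈ H.map φ, F (h * g) = F g) (x : RCos H) :
    F (rcosEquiv hsurj hker x).out = F (φ x.out) := by
  obtain ⟨h, hh, he⟩ := exists_mem_map_out_eq hsurj hker x
  rw [he, hF _ h hh]

lemma tsum_rcos_map_out (hsurj : Function.Surjective φ) (hker : φ.ker ≤ H)
    (hF : ∀ g, ∀ h ∈ H.map φ, F (h * g) = F g) :
    ∑' x : RCos H, F (φ x.out) = ∑' y : RCos (H.map φ), F y.out := by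
  rw [← (rcosEquiv hsurj hker).tsum_eq]
  exact tsum_congr fun x => (apply_rcosEquiv_out hsurj hker hF x).symm

lemma summable_rcos_map_out_iff (hsurj : Function.Surjective φ) (hker : φ.ker ≤ H)
    (hF : ∀ g, ∀ h ∈ H.map φ, F (h * g) = F g) :
    Summable (fun x : RCos H => F (φ x.out)) ↔ Summable (fun y : RCos (H.map φ) => F y.out) := by
  rw [← (rcosEquiv hsurj hker).summable_iff]
  exact summable_congr fun x => (apply_rcosEquiv_out hsurj hker hF x).symm

lemma l2_comp (hsurj : Function.Surjective φ) (hker : φ.ker ≤ H)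
    (hF : ∀ g, ∀ h ∈ H.map φ, F (h * g) = F g) : l2 H (F ∘ φ) = l2 (H.map φ) F :=
  congrArg Real.sqrt <| tsum_rcos_map_out (F := fun y => F y ^ 2) hsurj hker
    fun g h hh => by rw [hF g h hh]

lemma conv_comp (hsurj : Function.Surjective φ) (hker : φ.ker ≤ H) {f k : G₂ → ℝ}
    (hf : ∀ g, ∀ h ∈ H.map φ, f (g * h) = f g) (hk : ∀ g, ∀ h ∈ H.map φ, k (h * g) = k g) :
    conv H (f ∘ φ) (k ∘ φ) = conv (H.map φ) f k ∘ φ := by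
  funext g
  simp only [conv, Function.comp_apply, map_mul, map_inv]
  refine tsum_rcos_map_out (F := fun y => f (φ g * y⁻¹) * k y) hsurj hker fun y h hh => ?_
  rw [mul_inv_rev, ← mul_assoc, hf _ _ (inv_mem hh), hk y h hh]

lemma conv_mul_left {H : Subgroup G₂} {f : G₂ → ℝ} (hf : ∀ g, ∀ h ∈ H, f (h * g) = f g)
    (k : G₂ → ℝ) (g h : G₂) (hh : h ∈ H) : conv H f k (h * g) = conv H f k g :=
  tsum_congr fun x => by rw [mul_assoc, hf _ h hh]

lemma preimage_doubleCoset_map (hker : φ.ker ≤ H) (g : G₁) :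
    φ ⁻¹' {y | ∃ h₁ ∈ H.map φ, ∃ h₂ ∈ H.map φ, y = h₁ * φ g * h₂} =
      {y | ∃ h₁ ∈ H, ∃ h₂ ∈ H, y = h₁ * g * h₂} := by
  ext y
  simp only [Set.mem_preimage, Set.mem_ofPred_eq]
  constructor
  · rintro ⟨_, ⟨a₁, ha₁, rfl⟩, _, ⟨a₂, ha₂, rfl⟩, hy⟩
    have hk : (a₁ * g * a₂)⁻¹ * y ∈ φ.ker := by simp [hy, mul_assoc]
    exact ⟨a₁, ha₁, a₂ * ((a₁ * g * a₂)⁻¹ * y), mul_mem ha₂ (hker hk), by group⟩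
  · rintro ⟨h₁, hh₁, h₂, hh₂, rfl⟩
    exact ⟨φ h₁, Subgroup.mem_map_of_mem φ hh₁, φ h₂, Subgroup.mem_map_of_mem φ hh₂, by simp⟩

lemma FinDosetSupp.comp {f : G₂ → ℝ} (hf : FinDosetSupp (H.map φ) f) (hker : φ.ker ≤ H) :
    FinDosetSupp H (f ∘ φ) := by
  refine (hf.image (φ ⁻¹' ·)).subset ?_
  rintro _ ⟨g, hg, rfl⟩
  exact ⟨_, ⟨φ g, hg, rfl⟩, preimage_doubleCoset_map hker g⟩

lemma HeckeRDwrt.of_comp {L₁ : G₁ → ℝ} (hRD : HeckeRDwrt H L₁) (hsurj : Function.Surjective φ)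
    (hker : φ.ker ≤ H) {L₂ : G₂ → ℝ} (hL : ∀ g, L₂ (φ g) = L₁ g) :
    HeckeRDwrt (H.map φ) L₂ := by
  obtain ⟨P, hP⟩ := hRD
  refine ⟨P, fun r hr f k hf₀ hf hfin hfL hk₀ hk hksum => ?_⟩
  have hfl : ∀ g, ∀ h ∈ H.map φ, f (h * g) = f g := fun g h hh => by
    simpa using hf g h hh 1 (one_mem _)
  have hfr : ∀ g, ∀ h ∈ H.map φ, f (g * h) = f g := fun g h hh => by
    simpa using hf g 1 (one_mem _) h hh
  have key := hP r hr (f ∘ φ) (k ∘ φ) (fun _ => hf₀ _)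
    (fun g h₁ hh₁ h₂ hh₂ => by
      simpa using hf (φ g) _ (Subgroup.mem_map_of_mem φ hh₁) _ (Subgroup.mem_map_of_mem φ hh₂))
    (hfin.comp hker) (fun g hg => hL g ▸ hfL (φ g) hg) (fun _ => hk₀ _)
    (fun g h hh => by simpa using hk (φ g) _ (Subgroup.mem_map_of_mem φ hh))
    ((summable_rcos_map_out_iff (F := fun y => k y ^ 2) hsurj hker
      fun g h hh => by rw [hk g h hh]).2 hksum)
  rwa [conv_comp hsurj hker hfr hk, l2_comp hsurj hker (conv_mul_left hfl k),
    l2_comp hsurj hker hfl, l2_comp hsurj hker hk] at key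

end RightCosets

end HeckeRDPaper

open HeckeRDPaper in
/-- Pushing forward (RD) along a surjective homomorphism whose kernel
is contained in the almost normal subgroup. -/
theorem stmt11 {G₁ G₂ : Type*} [Group G₁] [Group G₂] (φ : G₁ →* G₂)
    (hsurj : Function.Surjective φ)
    (H₁ : Subgroup G₁) (hH₁ : AlmostNormal H₁) (hker : φ.ker ≤ H₁)
    (L₁ : G₁ → ℝ) (hL₁ : IsHeckeLength H₁ L₁) :
    AlmostNormal (H₁.map φ) ∧
      (HeckeRDwrt H₁ L₁ →
        ∃ L₂ : G₂ → ℝ, IsHeckeLength (H₁.map φ) L₂ ∧ (∀ g : G₁, L₂ (φ g) = L₁ g) ∧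
          HeckeRDwrt (H₁.map φ) L₂) := by
  refine ⟨hH₁.map hsurj hker, fun hRD => ?_⟩
  obtain ⟨L₂, hL⟩ := exists_comp_eq_of_apply_eq hsurj fun _ _ => hL₁.apply_eq_of_map_eq hker
  exact ⟨L₂, hL₁.of_comp hsurj hL, hL, hRD.of_comp hsurj hker hL⟩
end
end
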